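/- arXiv:math/0507180 — 6 statements merged into one kernel-verified Lean document; each statement's English description precedes it below -/
import Mathlib

section
/- If α(1 ∧ β) > d, then there is no distribution P in the class P_Σ = P_Σ(α, C0, β, L, c0, r0, μ_min, μ_max, C) (for any choice of the parameters C0, c0, r0, μ_min, μ_max and compact C ⊂ R^d) such that the regression function η associated with P hits the level 1/2 at a point x0 lying in the interior of the support of P_X. -/
open MeasureTheory Metric Set
open scoped ENNReal NNReal

noncomputable section

/-- Feature space: `ℝ^d` with the Euclidean norm. -/
abbrev Euc (d : ℕ) := EuclideanSpace ℝ (Fin d)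

/-- A sample of size `n`: `n` points of `ℝ^d × {0,1}` (labels modelled by `Bool`). -/
abbrev Sample (d n : ℕ) := Fin n → Euc d × Bool

/-- Joint law of `(X,Y)` determined by the marginal `PX` and the regression
function `η(x) = P(Y = 1 | X = x)`. -/
def jointLaw {d : ℕ} (PX : Measure (Euc d)) (η : Euc d → ℝ) : Measure (Euc d × Bool) :=
  PX.bind fun x =>
    ENNReal.ofReal (η x) • Measure.dirac (x, true) +
      ENNReal.ofReal (1 - η x) • Measure.dirac (x, false)

/-- Law `P^{⊗n}` of an i.i.d. sample of size `n`. -/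
def sampleLaw {d : ℕ} (PX : Measure (Euc d)) (η : Euc d → ℝ) (n : ℕ) :
    Measure (Sample d n) :=
  Measure.pi fun _ => jointLaw PX η

/-- Misclassification risk `R(f) = P(Y ≠ f(X))` of a decision rule `f`. -/
def risk {d : ℕ} (PX : Measure (Euc d)) (η : Euc d → ℝ) (f : Euc d → Bool) : ℝ :=
  ∫ x, (if f x then 1 - η x else η x) ∂PX

/-- The Bayes rule `f*(x) = 1{η(x) ≥ 1/2}`. -/
def bayes {d : ℕ} (η : Euc d → ℝ) : Euc d → Bool := fun x => decide ((1 : ℝ) / 2 ≤ η x)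

/-- The plug-in rule `1{g ≥ 1/2}` associated with a function `g`. -/
def plugin {d : ℕ} (g : Euc d → ℝ) : Euc d → Bool := fun x => decide ((1 : ℝ) / 2 ≤ g x)

/-- Margin (low noise) assumption MA(α, C0):
`P_X(0 < |η(X) − 1/2| ≤ t) ≤ C0 t^α` for all `t > 0`. -/
def Margin {d : ℕ} (PX : Measure (Euc d)) (η : Euc d → ℝ) (α C0 : ℝ) : Prop :=
  ∀ t : ℝ, 0 < t →
    PX {x | 0 < |η x - 1 / 2| ∧ |η x - 1 / 2| ≤ t} ≤ ENNReal.ofReal (C0 * t ^ α)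

/-- Taylor polynomial of degree `N` of `g` at `x`, evaluated at `x'`. -/
def taylorPoly {d : ℕ} (g : Euc d → ℝ) (N : ℕ) (x x' : Euc d) : ℝ :=
  ∑ k ∈ Finset.range (N + 1), (k.factorial : ℝ)⁻¹ * iteratedFDeriv ℝ k g x (fun _ => x' - x)

/-- The Hölder class `Σ(β, L, ℝ^d)`: `g` is `⌊β⌋` times continuously differentiable
(`⌊β⌋` = largest integer strictly less than `β`, i.e. `⌈β⌉₊ - 1` for `β > 0`) and its
Taylor polynomial of degree `⌊β⌋` approximates it to order `L‖x − x'‖^β`. -/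
def HolderClass {d : ℕ} (β L : ℝ) (g : Euc d → ℝ) : Prop :=
  ContDiff ℝ (⌈β⌉₊ - 1 : ℕ) g ∧
    ∀ x x' : Euc d, |g x' - taylorPoly g (⌈β⌉₊ - 1) x x'| ≤ L * ‖x' - x‖ ^ β

/-- `(c0, r0)`-regularity of a set `A`:
`λ[A ∩ B(x,r)] ≥ c0 λ[B(x,r)]` for all `0 < r ≤ r0` and `x ∈ A`. -/
def Regular {d : ℕ} (c0 r0 : ℝ) (A : Set (Euc d)) : Prop :=
  ∀ x ∈ A, ∀ r : ℝ, 0 < r → r ≤ r0 →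
    ENNReal.ofReal c0 * volume (closedBall x r) ≤ volume (A ∩ closedBall x r)

/-- Strong density assumption with parameters `(c0, r0, μmin, μmax, K)`. -/
def StrongDensity {d : ℕ} (PX : Measure (Euc d)) (c0 r0 μmin μmax : ℝ)
    (K : Set (Euc d)) : Prop :=
  ∃ A : Set (Euc d), IsCompact A ∧ A ⊆ K ∧ Regular c0 r0 A ∧
    ∃ μ : Euc d → ℝ, Measurable μ ∧ (∀ x ∈ A, μmin ≤ μ x ∧ μ x ≤ μmax) ∧
      (∀ x, x ∉ A → μ x = 0) ∧
      PX = volume.withDensity fun x => ENNReal.ofReal (μ x)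

/-- Mild density assumption with parameters `(c0, r0, μmax, K)`. -/
def MildDensity {d : ℕ} (PX : Measure (Euc d)) (c0 r0 μmax : ℝ)
    (K : Set (Euc d)) : Prop :=
  ∃ A : Set (Euc d), IsCompact A ∧ A ⊆ K ∧ Regular c0 r0 A ∧
    ∃ μ : Euc d → ℝ, Measurable μ ∧ (∀ x ∈ A, 0 ≤ μ x ∧ μ x ≤ μmax) ∧
      (∀ x, x ∉ A → μ x = 0) ∧
      PX = volume.withDensity fun x => ENNReal.ofReal (μ x)

/-- The class `P_Σ(α, C0, β, L, c0, r0, μmin, μmax, K)`, a distribution being encoded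
by its marginal `PX` together with its regression function `η`. -/
def MemPS {d : ℕ} (α C0 β L c0 r0 μmin μmax : ℝ) (K : Set (Euc d))
    (PX : Measure (Euc d)) (η : Euc d → ℝ) : Prop :=
  IsProbabilityMeasure PX ∧ Measurable η ∧ (∀ x, η x ∈ Icc (0 : ℝ) 1) ∧
    Margin PX η α C0 ∧ HolderClass β L η ∧ StrongDensity PX c0 r0 μmin μmax K

/-- Topological support of a measure on `ℝ^d`. -/
def msupport {d : ℕ} (PX : Measure (Euc d)) : Set (Euc d) :=
  {x | ∀ r : ℝ, 0 < r → 0 < PX (ball x r)}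

/-- `f` hits the level `a` at `x0`. -/
def Hits {d : ℕ} (f : Euc d → ℝ) (a : ℝ) (x0 : Euc d) : Prop :=
  f x0 = a ∧ ∀ r : ℝ, 0 < r → ∃ x ∈ closedBall x0 r, f x ≠ a

/-- `f` crosses the level `a` at `x0`. -/
def Crosses {d : ℕ} (f : Euc d → ℝ) (a : ℝ) (x0 : Euc d) : Prop :=
  ∀ r : ℝ, 0 < r → (∃ x ∈ closedBall x0 r, f x < a) ∧ ∃ x ∈ closedBall x0 r, a < f x

/-- Expected excess risk `E[R(f̂_n)] − R(f*)` of a plug-in classifier built from the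
estimator `hatη` of the regression function. -/
def expExcess {d : ℕ} (PX : Measure (Euc d)) (η : Euc d → ℝ) {n : ℕ}
    (hatη : Sample d n → Euc d → ℝ) : ℝ :=
  (∫ ω, risk PX η (plugin (hatη ω)) ∂sampleLaw PX η n) - risk PX η (bayes η)

/-- Expected excess risk `E[R(f̂_n)] − R(f*)` of a (general) classifier. -/
def expExcessRule {d : ℕ} (PX : Measure (Euc d)) (η : Euc d → ℝ) {n : ℕ}
    (fhat : Sample d n → Euc d → Bool) : ℝ :=
  (∫ ω, risk PX η (fhat ω) ∂sampleLaw PX η n) - risk PX η (bayes η)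

/-- Empirical misclassification risk of the plug-in rule `1{g ≥ 1/2}` on a sample. -/
def empRisk {d n : ℕ} (ω : Sample d n) (g : Euc d → ℝ) : ℝ :=
  (n : ℝ)⁻¹ * ∑ i : Fin n, if plugin g (ω i).1 ≠ (ω i).2 then (1 : ℝ) else 0

/-!
Near `x0` the regression function is `γ`-Hölder with `γ = min 1 β`, and `x0` lies in the
interior of the support set `A`. Take `x ∈ A` close to `x0` with `t = |η x - 1/2|` small but
positive. On the ball of radius `r ≍ t^{1/γ}` around `x`, `|η - 1/2|` stays in `(0, 2t]`, so
the margin assumption bounds its mass by `C0 (2t)^α`, while regularity of `A` and the lower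
density bound give mass at least of order `r^d ≍ t^{d/γ}`. Since `d/γ < α`, this fails for
small `t`.
-/

open Filter Topology

namespace HolderClass

variable {d : ℕ} {β L : ℝ} {η : Euc d → ℝ}

theorem abs_sub_le_of_le_one (hη : HolderClass β L η) (hβ1 : β ≤ 1)
    (x y : Euc d) : |η y - η x| ≤ L * dist y x ^ β := by
  have hdeg : ⌈β⌉₊ - 1 = 0 := by
    have : ⌈β⌉₊ ≤ 1 := Nat.ceil_le.mpr (by exact_mod_cast hβ1)
    omega
  have htaylor : taylorPoly η 0 x y = η x := by
    simp [taylorPoly, iteratedFDeriv_zero_apply]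
  simpa [hdeg, htaylor, dist_eq_norm] using hη.2 x y

theorem contDiff_one (hη : HolderClass β L η) (hβ : 1 < β) : ContDiff ℝ 1 η :=
  hη.1.of_le <| by
    have : 1 < ⌈β⌉₊ := Nat.lt_ceil.mpr (by exact_mod_cast hβ)
    exact_mod_cast (by omega : 1 ≤ ⌈β⌉₊ - 1)

theorem exists_holder_on_closedBall (hη : HolderClass β L η) (hL : 0 < L)
    (x0 : Euc d) : ∃ L' > 0, ∃ δ > 0, ∀ x ∈ closedBall x0 δ, ∀ y ∈ closedBall x0 δ,
      |η y - η x| ≤ L' * dist y x ^ min 1 β := by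
  rcases le_or_gt β 1 with hβ1 | hβ1
  · refine ⟨L, hL, 1, one_pos, fun x _ y _ => ?_⟩
    rw [min_eq_right hβ1]
    exact hη.abs_sub_le_of_le_one hβ1 x y
  · obtain ⟨K, s, hs, hlip⟩ := (hη.contDiff_one hβ1).contDiffAt.exists_lipschitzOnWith
    obtain ⟨δ, hδ, hball⟩ := Metric.nhds_basis_closedBall.mem_iff.mp hs
    refine ⟨K + 1, by positivity, δ, hδ, fun x hx y hy => ?_⟩
    rw [min_eq_left hβ1.le, Real.rpow_one, ← Real.dist_eq]
    calc dist (η y) (η x) ≤ K * dist y x := hlip.dist_le_mul y (hball hy) x (hball hx)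
      _ ≤ (K + 1) * dist y x := by gcongr; linarith

end HolderClass

theorem Hits.frequently_abs_sub_eq {d : ℕ} {f : Euc d → ℝ} {a : ℝ} {x0 : Euc d}
    (h : Hits f a x0) (hf : ContinuousAt f x0) {δ : ℝ} (hδ : 0 < δ) :
    ∃ᶠ t in 𝓝[>] 0, ∃ x ∈ closedBall x0 δ, |f x - a| = t := by
  rw [(nhdsGT_basis 0).frequently_iff]
  intro ε hε
  obtain ⟨δ', hδ', hnear⟩ := Metric.continuousAt_iff.mp hf ε hε
  obtain ⟨x, hx, hne⟩ := h.2 (min δ (δ' / 2)) (by positivity)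
  have hxδ' : dist x x0 < δ' :=
    (mem_closedBall.mp hx).trans_lt ((min_le_right _ _).trans_lt (half_lt_self hδ'))
  refine ⟨|f x - a|, ⟨abs_pos.mpr (sub_ne_zero.mpr hne), ?_⟩, x,
    closedBall_subset_closedBall (min_le_left _ _) hx, rfl⟩
  simpa [h.1, Real.dist_eq] using hnear hxδ'

theorem msupport_withDensity_subset {d : ℕ} {A : Set (Euc d)} (hA : IsClosed A)
    {μ : Euc d → ℝ} (hμ : ∀ x, x ∉ A → μ x = 0) :
    msupport (volume.withDensity fun x => ENNReal.ofReal (μ x)) ⊆ A := by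
  intro x hx
  by_contra hxA
  obtain ⟨s, hs, hball⟩ := Metric.isOpen_iff.mp hA.isOpen_compl x hxA
  refine (hx s hs).ne' ?_
  rw [withDensity_apply _ measurableSet_ball]
  exact setLIntegral_eq_zero measurableSet_ball fun y hy => by simp [hμ y (hball hy)]

theorem Regular.ofReal_mul_volume_le_withDensity {d : ℕ} {c0 r0 μmin : ℝ} {A : Set (Euc d)}
    (hreg : Regular c0 r0 A) (hA : MeasurableSet A) {μ : Euc d → ℝ}
    (hμ : ∀ x ∈ A, μmin ≤ μ x) {a : Euc d} (ha : a ∈ A) {r : ℝ} (hr : 0 < r)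
    (hr0 : r ≤ r0) :
    ENNReal.ofReal μmin * (ENNReal.ofReal c0 * volume (closedBall a r)) ≤
      volume.withDensity (fun x => ENNReal.ofReal (μ x)) (closedBall a r) :=
  calc ENNReal.ofReal μmin * (ENNReal.ofReal c0 * volume (closedBall a r))
      ≤ ENNReal.ofReal μmin * volume (A ∩ closedBall a r) := by
        gcongr; exact hreg a ha r hr hr0
    _ = ∫⁻ _ in A ∩ closedBall a r, ENNReal.ofReal μmin := (setLIntegral_const _ _).symm
    _ ≤ ∫⁻ y in A ∩ closedBall a r, ENNReal.ofReal (μ y) :=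
        setLIntegral_mono' (hA.inter measurableSet_closedBall) fun y hy =>
          ENNReal.ofReal_le_ofReal (hμ y hy.1)
    _ ≤ ∫⁻ y in closedBall a r, ENNReal.ofReal (μ y) := lintegral_mono_set inter_subset_right
    _ = _ := (withDensity_apply' _ _).symm

theorem Margin.measure_closedBall_le {d : ℕ} {PX : Measure (Euc d)} {η : Euc d → ℝ}
    {α C0 : ℝ} (h : Margin PX η α C0) {x : Euc d} {r : ℝ} (hx : η x ≠ 1 / 2)
    (hosc : ∀ y ∈ closedBall x r, |η y - η x| ≤ |η x - 1 / 2| / 2) :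
    PX (closedBall x r) ≤ ENNReal.ofReal (C0 * (2 * |η x - 1 / 2|) ^ α) := by
  have ht : 0 < |η x - 1 / 2| := abs_pos.mpr (sub_ne_zero.mpr hx)
  refine (measure_mono fun y hy => ?_).trans (h _ (by positivity))
  have hy := hosc y hy
  have h1 := abs_sub_abs_le_abs_sub (η x - 1 / 2) (η y - 1 / 2)
  have h2 := abs_sub_abs_le_abs_sub (η y - 1 / 2) (η x - 1 / 2)
  rw [show η x - 1 / 2 - (η y - 1 / 2) = -(η y - η x) by ring, abs_neg] at h1
  rw [show η y - 1 / 2 - (η x - 1 / 2) = η y - η x by ring] at h2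
  exact ⟨by linarith, by linarith⟩

theorem eventually_mul_rpow_lt_mul_rpow {p q A B : ℝ} (hpq : p < q) (hB : 0 < B) :
    ∀ᶠ t in 𝓝[>] (0 : ℝ), A * t ^ q < B * t ^ p := by
  have hqp : 0 < q - p := sub_pos.mpr hpq
  have hlim : Tendsto (fun t : ℝ => A * t ^ (q - p)) (𝓝[>] 0) (𝓝 0) := by
    have hcont : ContinuousAt (fun t : ℝ => A * t ^ (q - p)) 0 :=
      continuousAt_const.mul (Real.continuousAt_rpow_const _ _ (Or.inr hqp.le))
    simpa [Real.zero_rpow hqp.ne'] using hcont.tendsto.mono_left nhdsWithin_le_nhds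
  filter_upwards [hlim.eventually (gt_mem_nhds hB), self_mem_nhdsWithin] with t ht htpos
  calc A * t ^ q = A * t ^ (q - p) * t ^ p := by
        rw [mul_assoc, ← Real.rpow_add htpos, sub_add_cancel]
    _ < B * t ^ p := mul_lt_mul_of_pos_right ht (Real.rpow_pos_of_pos htpos p)

def holderRadius (L γ t : ℝ) : ℝ := (t / (2 * L)) ^ γ⁻¹

section holderRadius

variable {L γ t : ℝ}

theorem holderRadius_pos (hL : 0 < L) (ht : 0 < t) : 0 < holderRadius L γ t :=
  Real.rpow_pos_of_pos (by positivity) _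

theorem mul_holderRadius_rpow (hL : 0 < L) (hγ : 0 < γ) (ht : 0 ≤ t) :
    L * holderRadius L γ t ^ γ = t / 2 := by
  rw [holderRadius, ← Real.rpow_mul (by positivity), inv_mul_cancel₀ hγ.ne', Real.rpow_one]
  field_simp

theorem abs_sub_le_half_of_closedBall_holderRadius_subset {d : ℕ} {η : Euc d → ℝ}
    {s : Set (Euc d)} (hhol : ∀ x ∈ s, ∀ y ∈ s, |η y - η x| ≤ L * dist y x ^ γ)
    (hL : 0 < L) (hγ : 0 < γ) (ht : 0 < t) {x : Euc d}
    (hs : closedBall x (holderRadius L γ t) ⊆ s) :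
    ∀ y ∈ closedBall x (holderRadius L γ t), |η y - η x| ≤ t / 2 := fun y hy =>
  calc |η y - η x| ≤ L * dist y x ^ γ :=
        hhol x (hs (mem_closedBall_self (holderRadius_pos hL ht).le)) y (hs hy)
    _ ≤ L * holderRadius L γ t ^ γ := by gcongr; exact mem_closedBall.mp hy
    _ = t / 2 := mul_holderRadius_rpow hL hγ ht.le

theorem tendsto_holderRadius (hγ : 0 < γ) : Tendsto (holderRadius L γ) (𝓝 0) (𝓝 0) := by
  have hcont : ContinuousAt (holderRadius L γ) 0 :=
    (continuousAt_id.div_const _).rpow_const (Or.inr (inv_nonneg.mpr hγ.le))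
  simpa [holderRadius, Real.zero_rpow (inv_pos.mpr hγ).ne'] using hcont.tendsto

theorem eventually_mul_rpow_lt_mul_holderRadius_pow {d : ℕ} {α C κ : ℝ} (hL : 0 < L)
    (hγ : 0 < γ) (hκ : 0 < κ) (h : (d : ℝ) < α * γ) :
    ∀ᶠ t in 𝓝[>] 0, C * (2 * t) ^ α < κ * holderRadius L γ t ^ d := by
  have hdα : γ⁻¹ * d < α := by rwa [inv_mul_lt_iff₀ hγ, mul_comm]
  filter_upwards [eventually_mul_rpow_lt_mul_rpow (A := C * 2 ^ α)
    (B := κ / (2 * L) ^ (γ⁻¹ * d)) hdα (by positivity), self_mem_nhdsWithin] with t ht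
    (htpos : 0 < t)
  rw [holderRadius, ← Real.rpow_mul_natCast (by positivity),
    Real.div_rpow htpos.le (by positivity), Real.mul_rpow zero_le_two htpos.le]
  convert ht using 1 <;> ring

end holderRadius

theorem mul_measureReal_closedBall_le_of_margin {d : ℕ} {α C0 c0 r0 μmin : ℝ}
    {A : Set (Euc d)} {μ η : Euc d → ℝ} (hreg : Regular c0 r0 A) (hA : MeasurableSet A)
    (hμ : ∀ x ∈ A, μmin ≤ μ x)
    (hmargin : Margin (volume.withDensity fun x => ENNReal.ofReal (μ x)) η α C0)
    (hC0 : 0 ≤ C0) (hc0 : 0 ≤ c0) (hμmin : 0 ≤ μmin) {x : Euc d} (hx : x ∈ A) {r : ℝ}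
    (hr : 0 < r) (hr0 : r ≤ r0) (hηx : η x ≠ 1 / 2)
    (hosc : ∀ y ∈ closedBall x r, |η y - η x| ≤ |η x - 1 / 2| / 2) :
    μmin * c0 * volume.real (closedBall x r) ≤ C0 * (2 * |η x - 1 / 2|) ^ α := by
  have hmass := (hreg.ofReal_mul_volume_le_withDensity hA hμ hx hr hr0).trans
    (hmargin.measure_closedBall_le hηx hosc)
  rwa [← ofReal_measureReal measure_closedBall_lt_top.ne, ← ENNReal.ofReal_mul hc0,
    ← ENNReal.ofReal_mul hμmin, ENNReal.ofReal_le_ofReal_iff (by positivity), ← mul_assoc]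
    at hmass

theorem stmt3_general (d : ℕ) (α β L : ℝ) (hβ : 0 < β) (hL : 0 < L)
    (h : (d : ℝ) < α * min 1 β) :
    ¬ ∃ (C0 c0 r0 μmin μmax : ℝ) (K : Set (Euc d)) (PX : Measure (Euc d))
        (η : Euc d → ℝ) (x0 : Euc d),
        0 < C0 ∧ 0 < c0 ∧ 0 < r0 ∧ 0 < μmin ∧ μmin ≤ μmax ∧ IsCompact K ∧
        MemPS α C0 β L c0 r0 μmin μmax K PX η ∧
        x0 ∈ interior (msupport PX) ∧ Hits η (1 / 2) x0 := by
  rintro ⟨C0, c0, r0, μmin, μmax, K, PX, η, x0, hC0, hc0, hr0, hμmin, -, -,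
    ⟨-, -, -, hmargin, hholder, A, hAcomp, -, hreg, μ, -, hμb, hμ0, rfl⟩, hx0, hhit⟩
  set γ := min 1 β
  have hγ : 0 < γ := lt_min one_pos hβ
  obtain ⟨L', hL', δ, hδ, hhol⟩ := hholder.exists_holder_on_closedBall hL x0
  obtain ⟨ε, hε, hεA⟩ : ∃ ε > 0, closedBall x0 ε ⊆ A :=
    Metric.nhds_basis_closedBall.mem_iff.mp <| mem_of_superset
      (mem_interior_iff_mem_nhds.mp hx0) (msupport_withDensity_subset hAcomp.isClosed hμ0)
  set v := volume.real (closedBall (0 : Euc d) 1)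
  have hv : 0 < v :=
    ENNReal.toReal_pos (measure_closedBall_pos _ _ one_pos).ne' measure_closedBall_lt_top.ne
  have hsmall := eventually_mem_nhdsWithin.and <|
    (((tendsto_holderRadius (L := L') hγ).eventually (ge_mem_nhds (lt_min hr0 (half_pos hδ))))
      |>.filter_mono nhdsWithin_le_nhds).and
    (eventually_mul_rpow_lt_mul_holderRadius_pow (C := C0) hL' hγ
      (by positivity : 0 < μmin * c0 * v) h)
  obtain ⟨_, ⟨x, hx, rfl⟩, ht, hr, hlt⟩ :=
    ((hhit.frequently_abs_sub_eq hholder.1.continuous.continuousAt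
      (lt_min hε (half_pos hδ))).and_eventually hsmall).exists
  have hball : closedBall x (holderRadius L' γ |η x - 1 / 2|) ⊆ closedBall x0 δ :=
    closedBall_subset_closedBall' <| by
      linarith [mem_closedBall.mp hx, min_le_right ε (δ / 2), min_le_right r0 (δ / 2)]
  have hmass := mul_measureReal_closedBall_le_of_margin hreg hAcomp.isClosed.measurableSet
    (fun y hy => (hμb y hy).1) hmargin hC0.le hc0.le hμmin.le
    (hεA (closedBall_subset_closedBall (min_le_left _ _) hx)) (holderRadius_pos hL' ht)
    (hr.trans (min_le_left _ _)) (sub_ne_zero.mp (abs_pos.mp ht))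
    (abs_sub_le_half_of_closedBall_holderRadius_subset hhol hL' hγ ht hball)
  rw [Measure.addHaar_real_closedBall' _ _ (holderRadius_pos hL' ht).le,
    finrank_euclideanSpace_fin] at hmass
  linarith

/-- Proposition 3.4, first item. If `α(1 ∧ β) > d`, no distribution of
the class `P_Σ` (whatever the parameters `C0, c0, r0, μmin, μmax` and the compact `K`)
has a regression function hitting `1/2` in the interior of the support of `P_X`. -/
theorem stmt3 (d : ℕ) (hd : 1 ≤ d) (α β L : ℝ) (hα : 0 < α) (hβ : 0 < β) (hL : 0 < L)
    (h : (d : ℝ) < α * min 1 β) :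
    ¬ ∃ (C0 c0 r0 μmin μmax : ℝ) (K : Set (Euc d)) (PX : Measure (Euc d))
        (η : Euc d → ℝ) (x0 : Euc d),
        0 < C0 ∧ 0 < c0 ∧ 0 < r0 ∧ 0 < μmin ∧ μmin ≤ μmax ∧ IsCompact K ∧
        MemPS α C0 β L c0 r0 μmin μmax K PX η ∧
        x0 ∈ interior (msupport PX) ∧ Hits η (1 / 2) x0 :=
  stmt3_general d α β L hβ hL h

end
end

section
/- For any α, β > 0, any integer d ≥ 2α, any L > 0 and any compact C ⊂ R^d with nonempty interior, there exist parameters C0 > 0, c0 > 0, r0 > 0 and 0 < μ_min < μ_max < ∞ and a distribution P ∈ P_Σ(α, C0, β, L, c0, r0, μ_min, μ_max, C) such that the regression function η associated with P hits the level 1/2 at a point lying in the interior of the support of P_X. -/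
open MeasureTheory Metric Set
open scoped ENNReal NNReal

noncomputable section

/-! Take `η = 1/2 + ε ψ`, where `ψ` is smooth, compactly supported and equal to `‖x - z‖²` on a
ball `B(z, r) ⊆ K`, and let `P_X` be uniform on that ball. Then `η` hits `1/2` at the centre `z`;
bounded derivatives put `ψ`, hence `η` for small `ε`, in the Hölder class; and inside the ball
the margin set `{0 < |η - 1/2| ≤ t}` lies in the ball of radius `√(t / ε)`, whose mass
`≍ t ^ (d / 2)` is `O(t ^ α)` because `d ≥ 2α`. -/

open scoped ContDiff Topology
open Filter ProbabilityTheory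

section IteratedFDerivAlongLine

variable {E : Type*} [NormedAddCommGroup E] [NormedSpace ℝ E]

theorem abs_iteratedFDeriv_apply_const_le {g : E → ℝ} {k : ℕ} {y : E} {C : ℝ}
    (hC : ‖iteratedFDeriv ℝ k g y‖ ≤ C) (h : E) :
    |iteratedFDeriv ℝ k g y (fun _ => h)| ≤ C * ‖h‖ ^ k := by
  simpa using (iteratedFDeriv ℝ k g y).le_mul_prod_of_opNorm_le_of_le (m := fun _ => h) hC
    (fun _ => le_rfl)

theorem hasDerivAt_iteratedFDeriv_line {g : E → ℝ} {n : WithTop ℕ∞} {j : ℕ}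
    (hg : ContDiff ℝ n g) (hj : (j : WithTop ℕ∞) < n) (x h : E) (t : ℝ) :
    HasDerivAt (fun s : ℝ => iteratedFDeriv ℝ j g (x + s • h) (fun _ => h))
      (iteratedFDeriv ℝ (j + 1) g (x + t • h) (fun _ => h)) t := by
  have hline : HasDerivAt (fun s : ℝ => x + s • h) h t := by
    simpa using ((hasDerivAt_id t).smul_const h).const_add x
  have hD : HasDerivAt (fun s : ℝ => iteratedFDeriv ℝ j g (x + s • h))
      (fderiv ℝ (iteratedFDeriv ℝ j g) (x + t • h) h) t :=
    ((hg.differentiable_iteratedFDeriv hj) _).hasFDerivAt.comp_hasDerivAt t hline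
  rw [iteratedFDeriv_succ_apply_left]
  exact (ContinuousMultilinearMap.apply ℝ (fun _ : Fin j => E) ℝ
    (fun _ => h)).hasFDerivAt.comp_hasDerivAt t hD

/-- The Taylor polynomial of `s ↦ g (x + s • h)` at `t`, of degree `N`, evaluated at `1`. -/
def taylorSumLine (g : E → ℝ) (N : ℕ) (x h : E) (t : ℝ) : ℝ :=
  ∑ j ∈ Finset.range (N + 1),
    (1 - t) ^ j / (j.factorial : ℝ) * iteratedFDeriv ℝ j g (x + t • h) (fun _ => h)

theorem hasDerivAt_taylorSumLine {g : E → ℝ} {N : ℕ} (hg : ContDiff ℝ (N + 1) g)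
    (x h : E) (t : ℝ) :
    HasDerivAt (taylorSumLine g N x h)
      ((1 - t) ^ N / (N.factorial : ℝ) * iteratedFDeriv ℝ (N + 1) g (x + t • h) (fun _ => h))
      t := by
  induction N with
  | zero =>
    have hline := hasDerivAt_iteratedFDeriv_line hg (j := 0) (by simp) x h t
    convert hline using 1
    · funext s
      simp [taylorSumLine]
    · simp
  | succ N ih =>
    have hprev := ih (hg.of_le (by norm_cast; omega))
    have hcoef : HasDerivAt (fun s : ℝ => (1 - s) ^ (N + 1) / ((N + 1).factorial : ℝ))
        ((N + 1 : ℕ) * (1 - t) ^ N * (-1) / ((N + 1).factorial : ℝ)) t := by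
      simpa using (((hasDerivAt_id t).const_sub 1).pow (N + 1)).div_const _
    have hterm := hcoef.fun_mul
      (hasDerivAt_iteratedFDeriv_line hg (j := N + 1) (by norm_cast; omega) x h t)
    have hsum : taylorSumLine g (N + 1) x h = fun s => taylorSumLine g N x h s +
        (1 - s) ^ (N + 1) / ((N + 1).factorial : ℝ) *
          iteratedFDeriv ℝ (N + 1) g (x + s • h) (fun _ => h) := by
      funext s
      simp only [taylorSumLine, Finset.sum_range_succ _ (N + 1)]
    rw [hsum]
    refine (hprev.add hterm).congr_deriv ?_
    rw [Nat.factorial_succ]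
    push_cast
    field_simp
    ring

end IteratedFDerivAlongLine

section Holder

variable {d : ℕ}

theorem abs_sub_taylorPoly_le {g : Euc d → ℝ} {N : ℕ} {M : ℝ} (hg : ContDiff ℝ (N + 1) g)
    (hM : ∀ y, ‖iteratedFDeriv ℝ (N + 1) g y‖ ≤ M) (x x' : Euc d) :
    |g x' - taylorPoly g N x x'| ≤ M * ‖x' - x‖ ^ (N + 1) := by
  have hend : taylorSumLine g N x (x' - x) 1 = g x' := by
    simp [taylorSumLine, Finset.sum_range_succ']
  have hstart : taylorSumLine g N x (x' - x) 0 = taylorPoly g N x x' := by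
    simp [taylorSumLine, taylorPoly, div_eq_inv_mul]
  have hbound : ∀ t ∈ Ico (0 : ℝ) 1, ‖(1 - t) ^ N / (N.factorial : ℝ) *
      iteratedFDeriv ℝ (N + 1) g (x + t • (x' - x)) (fun _ => x' - x)‖ ≤
        M * ‖x' - x‖ ^ (N + 1) := by
    intro t ⟨ht0, ht1⟩
    have h1t : 0 ≤ 1 - t := by linarith
    have hcoef : |(1 - t) ^ N / (N.factorial : ℝ)| ≤ 1 := by
      rw [abs_of_nonneg (by positivity)]
      calc (1 - t) ^ N / (N.factorial : ℝ) ≤ 1 / 1 :=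
            div_le_div₀ zero_le_one (pow_le_one₀ h1t (by linarith)) zero_lt_one
              (by exact_mod_cast N.factorial_pos)
        _ = 1 := one_div_one
    rw [Real.norm_eq_abs, abs_mul, ← one_mul (M * _)]
    exact mul_le_mul hcoef (abs_iteratedFDeriv_apply_const_le (hM _) _) (abs_nonneg _) zero_le_one
  rw [← hend, ← hstart, ← Real.norm_eq_abs]
  exact norm_image_sub_le_of_norm_deriv_le_segment_01'
    (fun t _ => (hasDerivAt_taylorSumLine hg _ _ t).hasDerivWithinAt) hbound

theorem abs_taylorPoly_le {g : Euc d → ℝ} {N : ℕ} {M : ℝ}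
    (hM : ∀ k ≤ N, ∀ y, ‖iteratedFDeriv ℝ k g y‖ ≤ M) {x x' : Euc d} (hfar : 1 ≤ ‖x' - x‖) :
    |taylorPoly g N x x'| ≤ (N + 1) * M * ‖x' - x‖ ^ N := by
  have hM0 : 0 ≤ M := (norm_nonneg _).trans (hM 0 (Nat.zero_le _) x)
  have hterm : ∀ k ∈ Finset.range (N + 1),
      |(k.factorial : ℝ)⁻¹ * iteratedFDeriv ℝ k g x (fun _ => x' - x)| ≤ M * ‖x' - x‖ ^ N := by
    intro k hk
    have hkN : k ≤ N := Nat.lt_succ_iff.mp (Finset.mem_range.mp hk)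
    rw [abs_mul, abs_of_pos (by positivity), ← one_mul (M * _)]
    refine mul_le_mul (inv_le_one_of_one_le₀ (by exact_mod_cast k.factorial_pos)) ?_
      (abs_nonneg _) zero_le_one
    exact (abs_iteratedFDeriv_apply_const_le (hM k hkN x) _).trans
      (mul_le_mul_of_nonneg_left (pow_le_pow_right₀ hfar hkN) hM0)
  calc |taylorPoly g N x x'| ≤ ∑ k ∈ Finset.range (N + 1), M * ‖x' - x‖ ^ N :=
        (Finset.abs_sum_le_sum_abs _ _).trans (Finset.sum_le_sum hterm)
    _ = (N + 1) * M * ‖x' - x‖ ^ N := by simp [mul_assoc]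

/-- Near the diagonal the Taylor remainder of order `⌈β⌉₊` is below `‖x' - x‖ ^ β`; far from it
`g` and its Taylor polynomial are separately bounded by `‖x' - x‖ ^ ⌊β⌋`. -/
theorem holderClass_of_norm_iteratedFDeriv_le {g : Euc d → ℝ} {β M : ℝ} (hβ : 0 < β)
    (hg : ContDiff ℝ ⌈β⌉₊ g) (hM : ∀ k ≤ ⌈β⌉₊, ∀ y, ‖iteratedFDeriv ℝ k g y‖ ≤ M) :
    HolderClass β ((⌈β⌉₊ + 1) * M) g := by
  obtain ⟨N, hN⟩ : ∃ N, ⌈β⌉₊ = N + 1 := Nat.exists_eq_add_one.2 (Nat.ceil_pos.2 hβ)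
  have hNβ : (N : ℝ) ≤ β := (Nat.lt_ceil.1 (by omega : N < ⌈β⌉₊)).le
  have hβN : β ≤ N + 1 := by exact_mod_cast hN ▸ Nat.le_ceil β
  have hM0 : 0 ≤ M := (norm_nonneg _).trans (hM 0 (Nat.zero_le _) 0)
  rw [hN] at hg hM
  unfold HolderClass
  rw [hN, Nat.add_sub_cancel]
  refine ⟨hg.of_le (by norm_cast; omega), fun x x' => ?_⟩
  push_cast
  set ρ := ‖x' - x‖
  rcases le_total ρ 1 with hnear | hfar
  · calc |g x' - taylorPoly g N x x'| ≤ M * ρ ^ (N + 1) :=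
          abs_sub_taylorPoly_le (by exact_mod_cast hg) (hM _ le_rfl) x x'
      _ ≤ 1 * M * ρ ^ β := by
          rw [one_mul, ← Real.rpow_natCast]
          exact mul_le_mul_of_nonneg_left (Real.rpow_le_rpow_of_exponent_ge' (norm_nonneg _)
            hnear hβ.le (by exact_mod_cast hβN)) hM0
      _ ≤ (N + 1 + 1) * M * ρ ^ β := by gcongr; linarith
  · have hg0 : |g x'| ≤ M * ρ ^ N := by
      have := hM 0 (Nat.zero_le _) x'
      rw [norm_iteratedFDeriv_zero, Real.norm_eq_abs] at this
      exact this.trans (le_mul_of_one_le_right hM0 (one_le_pow₀ hfar))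
    calc |g x' - taylorPoly g N x x'| ≤ |g x'| + |taylorPoly g N x x'| := abs_sub _ _
      _ ≤ M * ρ ^ N + (N + 1) * M * ρ ^ N :=
          add_le_add hg0 (abs_taylorPoly_le (fun k hk => hM k (by omega)) hfar)
      _ = (N + 1 + 1) * M * ρ ^ (N : ℝ) := by rw [Real.rpow_natCast]; ring
      _ ≤ (N + 1 + 1) * M * ρ ^ β := by gcongr

theorem HasCompactSupport.exists_holderClass {g : Euc d → ℝ} {β : ℝ} (hβ : 0 < β)
    (hg : ContDiff ℝ ⌈β⌉₊ g) (hcs : HasCompactSupport g) : ∃ L, HolderClass β L g := by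
  choose C hC using fun k : Fin (⌈β⌉₊ + 1) => (hcs.iteratedFDeriv k).exists_bound_of_continuous
    (hg.continuous_iteratedFDeriv (by exact_mod_cast Nat.lt_succ_iff.1 k.is_lt))
  obtain ⟨M, hM⟩ := Finite.exists_le C
  exact ⟨_, holderClass_of_norm_iteratedFDeriv_le hβ hg fun k hk y =>
    (hC ⟨k, Nat.lt_succ_of_le hk⟩ y).trans (hM _)⟩

theorem HolderClass.mono {g : Euc d → ℝ} {β L L' : ℝ} (hg : HolderClass β L g) (hL : L ≤ L') :
    HolderClass β L' g :=
  ⟨hg.1, fun x x' => (hg.2 x x').trans (by gcongr)⟩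

theorem taylorPoly_const_add_mul {g : Euc d → ℝ} {N : ℕ} (hg : ContDiff ℝ N g) (a c : ℝ)
    (x x' : Euc d) :
    taylorPoly (fun y => a + c * g y) N x x' = a + c * taylorPoly g N x x' := by
  have hderiv : ∀ k ∈ Finset.range N,
      iteratedFDeriv ℝ (k + 1) (fun y => a + c * g y) x =
        c • iteratedFDeriv ℝ (k + 1) g x := by
    intro k hk
    have hgk : ContDiffAt ℝ (k + 1 : ℕ) g x :=
      (hg.of_le (by exact_mod_cast Finset.mem_range.1 hk)).contDiffAt
    have hsplit : iteratedFDeriv ℝ (k + 1) (fun y => a + c * g y) x =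
        iteratedFDeriv ℝ (k + 1) (fun _ => a) x + iteratedFDeriv ℝ (k + 1) (fun y => c • g y) x :=
      fun_iteratedFDeriv_add_apply contDiff_const.contDiffAt (hgk.const_smul c)
    rw [hsplit, iteratedFDeriv_const_of_ne k.succ_ne_zero, Pi.zero_apply, zero_add]
    exact iteratedFDeriv_const_smul_apply' hgk
  simp only [taylorPoly, Finset.sum_range_succ' _ N]
  rw [Finset.sum_congr rfl fun k hk => by rw [hderiv k hk]]
  simp only [smul_apply, smul_eq_mul, iteratedFDeriv_zero_apply,
    Nat.factorial_zero, Nat.cast_one, inv_one, one_mul, mul_add, Finset.mul_sum, mul_left_comm c]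
  ring

theorem HolderClass.const_add_mul {g : Euc d → ℝ} {β L : ℝ} (hg : HolderClass β L g)
    (a c : ℝ) : HolderClass β (|c| * L) (fun y => a + c * g y) := by
  refine ⟨contDiff_const.add (contDiff_const.mul hg.1), fun x x' => ?_⟩
  rw [taylorPoly_const_add_mul hg.1, add_sub_add_left_eq_sub, ← mul_sub, abs_mul, mul_assoc]
  exact mul_le_mul_of_nonneg_left (hg.2 x x') (abs_nonneg c)

end Holder

section UniformOnBall

theorem exists_closedBall_subset_closedBall_inter_closedBall {E : Type*}
    [NormedAddCommGroup E] [NormedSpace ℝ E] {x z : E} {r s : ℝ} (hx : x ∈ closedBall z r)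
    (hs : 0 < s) (hsr : s ≤ r) :
    ∃ y, closedBall y (s / 2) ⊆ closedBall z r ∩ closedBall x s := by
  have hr : 0 < r := hs.trans_le hsr
  have hxz : dist x z ≤ r := hx
  set c := s / (2 * r)
  have hc0 : 0 ≤ c := by positivity
  have hcr : c * r = s / 2 := by simp only [c]; field_simp
  have hc1 : c ≤ 1 := by
    rw [div_le_one (by positivity)]
    linarith
  refine ⟨AffineMap.lineMap x z c, fun w hw => ⟨?_, ?_⟩⟩
  · have hyz : dist (AffineMap.lineMap x z c) z ≤ (1 - c) * r := by
      rw [dist_lineMap_right, Real.norm_eq_abs, abs_of_nonneg (by linarith)]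
      exact mul_le_mul_of_nonneg_left hxz (by linarith)
    exact (dist_triangle w _ z).trans (by rw [mem_closedBall] at hw; linarith)
  · have hyx : dist (AffineMap.lineMap x z c) x ≤ c * r := by
      rw [dist_lineMap_left, Real.norm_eq_abs, abs_of_nonneg hc0]
      exact mul_le_mul_of_nonneg_left hxz hc0
    exact (dist_triangle w _ x).trans (by rw [mem_closedBall] at hw; linarith)

variable {d : ℕ}

theorem regular_closedBall (z : Euc d) (r : ℝ) : Regular ((1 / 2) ^ d) r (closedBall z r) := by
  intro x hx s hs hsr
  obtain ⟨y, hy⟩ := exists_closedBall_subset_closedBall_inter_closedBall hx hs hsr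
  calc ENNReal.ofReal ((1 / 2) ^ d) * volume (closedBall x s)
      = volume (closedBall y (1 / 2 * s)) := by
        rw [Measure.addHaar_closedBall_mul volume y (by norm_num) hs.le,
          Measure.addHaar_closedBall_center volume x, finrank_euclideanSpace_fin]
    _ ≤ volume (closedBall z r ∩ closedBall x s) :=
        measure_mono (by rwa [one_div_mul_eq_div])

theorem cond_eq_withDensity_ofReal_indicator {Ω : Type*} [MeasurableSpace Ω] (μ : Measure Ω)
    {s : Set Ω} (hs : MeasurableSet s) (hs0 : μ s ≠ 0) (hsT : μ s ≠ ⊤) :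
    μ[|s] = μ.withDensity fun x => ENNReal.ofReal (s.indicator (fun _ => (μ s).toReal⁻¹) x) := by
  have hdens : (fun x => ENNReal.ofReal (s.indicator (fun _ => (μ s).toReal⁻¹) x)) =
      s.indicator fun _ => (μ s)⁻¹ := by
    funext x
    by_cases hx : x ∈ s
    · simp [hx, ENNReal.ofReal_inv_of_pos (ENNReal.toReal_pos hs0 hsT), ENNReal.ofReal_toReal hsT]
    · simp [hx]
  rw [hdens, withDensity_indicator hs, withDensity_const, ProbabilityTheory.cond]

theorem strongDensity_cond_closedBall {z : Euc d} {r μmin μmax : ℝ} {K : Set (Euc d)}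
    (hr : 0 < r) (hrK : closedBall z r ⊆ K) (hmin : μmin ≤ (volume (closedBall z r)).toReal⁻¹)
    (hmax : (volume (closedBall z r)).toReal⁻¹ ≤ μmax) :
    StrongDensity (volume[|closedBall z r]) ((1 / 2) ^ d) r μmin μmax K := by
  refine ⟨closedBall z r, isCompact_closedBall z r, hrK, regular_closedBall z r, _,
    measurable_const.indicator measurableSet_closedBall, fun x hx => ?_, fun x hx => ?_,
    cond_eq_withDensity_ofReal_indicator volume measurableSet_closedBall
      (measure_closedBall_pos volume z hr).ne' measure_closedBall_lt_top.ne⟩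
  · rw [indicator_of_mem hx]
    exact ⟨hmin, hmax⟩
  · rw [indicator_of_notMem hx]

/-- Inside the ball, the margin set at level `t` lies in the ball of radius `√(t / ε)`, whose mass
is `(t / (ε r²)) ^ (d / 2) ≤ (t / (ε r²)) ^ α` once `t ≤ ε r²`. -/
theorem margin_cond_closedBall {z : Euc d} {r ε α : ℝ} (hr : 0 < r) (hε : 0 < ε) (hα : 0 < α)
    (hαd : 2 * α ≤ d) {η : Euc d → ℝ}
    (hη : ∀ x ∈ closedBall z r, η x = 1 / 2 + ε * ‖x - z‖ ^ 2) :
    Margin (volume[|closedBall z r]) η α ((ε * r ^ 2) ^ α)⁻¹ := by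
  intro t ht
  set s := t / (ε * r ^ 2)
  have hs : 0 < s := by positivity
  rw [show ((ε * r ^ 2) ^ α)⁻¹ * t ^ α = s ^ α by
    rw [Real.div_rpow ht.le (by positivity)]; ring]
  rcases le_total 1 s with hs1 | hs1
  · calc volume[{x | 0 < |η x - 1 / 2| ∧ |η x - 1 / 2| ≤ t} | closedBall z r]
        ≤ volume[univ | closedBall z r] := measure_mono (subset_univ _)
      _ = 1 := by
        rw [cond_apply measurableSet_closedBall, inter_univ]
        exact ENNReal.inv_mul_cancel (measure_closedBall_pos volume z hr).ne'
          measure_closedBall_lt_top.ne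
      _ ≤ ENNReal.ofReal (s ^ α) := ENNReal.one_le_ofReal.2 (Real.one_le_rpow hs1 hα.le)
  have hsub : closedBall z r ∩ {x | 0 < |η x - 1 / 2| ∧ |η x - 1 / 2| ≤ t} ⊆
      closedBall z (√s * r) := by
    rintro x ⟨hxA, -, hxt⟩
    rw [hη x hxA, add_sub_cancel_left, abs_of_nonneg (by positivity)] at hxt
    rw [mem_closedBall, dist_eq_norm, ← pow_le_pow_iff_left₀ (norm_nonneg _) (by positivity)
      two_ne_zero, mul_pow, Real.sq_sqrt hs.le]
    calc ‖x - z‖ ^ 2 ≤ t / ε := by rwa [le_div_iff₀' hε]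
      _ = s * r ^ 2 := by simp only [s]; field_simp
  have hpow : √s ^ d ≤ s ^ α := by
    rw [Real.sqrt_eq_rpow, ← Real.rpow_natCast, ← Real.rpow_mul hs.le]
    exact Real.rpow_le_rpow_of_exponent_ge' hs.le hs1 hα.le (by linarith)
  calc volume[{x | 0 < |η x - 1 / 2| ∧ |η x - 1 / 2| ≤ t} | closedBall z r]
      ≤ (volume (closedBall z r))⁻¹ * volume (closedBall z (√s * r)) := by
        rw [cond_apply measurableSet_closedBall]
        exact mul_le_mul_of_nonneg_left (measure_mono hsub) (by positivity)
    _ = ENNReal.ofReal (√s ^ d) := by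
        rw [Measure.addHaar_closedBall_mul volume z (Real.sqrt_nonneg s) hr.le,
          ← Measure.addHaar_closedBall_center volume z, finrank_euclideanSpace_fin, mul_comm,
          ENNReal.mul_inv_cancel_right (measure_closedBall_pos volume z hr).ne'
            measure_closedBall_lt_top.ne]
    _ ≤ ENNReal.ofReal (s ^ α) := ENNReal.ofReal_le_ofReal hpow

theorem interior_subset_msupport_cond {A : Set (Euc d)} (hA : MeasurableSet A)
    (hAT : volume A ≠ ⊤) : interior A ⊆ msupport (volume[|A]) := by
  intro x hx ρ hρ
  rw [cond_apply hA]
  refine ENNReal.mul_pos (ENNReal.inv_ne_zero.2 hAT) (ne_of_gt ?_)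
  exact ((isOpen_interior.inter isOpen_ball).measure_pos volume ⟨x, hx, mem_ball_self hρ⟩).trans_le
    (measure_mono (inter_subset_inter_left _ interior_subset))

theorem hits_of_eqOn_closedBall [Nontrivial (Euc d)] {η : Euc d → ℝ} {z : Euc d} {r ε a : ℝ}
    (hr : 0 < r) (hε : ε ≠ 0) (hη : ∀ x ∈ closedBall z r, η x = a + ε * ‖x - z‖ ^ 2) :
    Hits η a z := by
  refine ⟨by simp [hη z (mem_closedBall_self hr.le)], fun ρ hρ => ?_⟩
  obtain ⟨v, hv⟩ := exists_norm_eq (Euc d) (lt_min hρ hr).le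
  have hxz : ‖z + v - z‖ = min ρ r := by rwa [add_sub_cancel_left]
  refine ⟨z + v, ?_, ?_⟩
  · rw [mem_closedBall, dist_eq_norm, hxz]
    exact min_le_left _ _
  · rw [hη _ (by rw [mem_closedBall, dist_eq_norm, hxz]; exact min_le_right _ _), hxz]
    have : 0 < min ρ r := lt_min hρ hr
    simp [hε, this.ne']

end UniformOnBall

theorem exists_contDiff_hasCompactSupport_eqOn_sq_norm_sub {E : Type*} [NormedAddCommGroup E]
    [InnerProductSpace ℝ E] [FiniteDimensional ℝ E] (z : E) {r : ℝ} (hr : 0 < r) :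
    ∃ ψ : E → ℝ, ContDiff ℝ ∞ ψ ∧ HasCompactSupport ψ ∧
      ∀ x ∈ closedBall z r, ψ x = ‖x - z‖ ^ 2 := by
  let f : ContDiffBump z := ⟨r, 2 * r, hr, by linarith⟩
  refine ⟨fun x => ‖x - z‖ ^ 2 * f x,
    ((contDiff_id.sub contDiff_const).norm_sq ℝ).mul f.contDiff, f.hasCompactSupport.mul_left,
    fun x hx => ?_⟩
  simp [f.one_of_mem_closedBall hx]

theorem exists_pos_mul_le_and_mul_le {a₁ a₂ b₁ b₂ : ℝ} (hb₁ : 0 < b₁) (hb₂ : 0 < b₂) :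
    ∃ ε > 0, ε * a₁ ≤ b₁ ∧ ε * a₂ ≤ b₂ := by
  have hsmall : ∀ {a b : ℝ}, 0 < b → ∀ᶠ ε in 𝓝[>] (0 : ℝ), ε * a ≤ b := fun {a b} hb =>
    nhdsWithin_le_nhds <| ((continuous_id.mul continuous_const).tendsto' 0 0 (by simp)).eventually
      (ge_mem_nhds hb)
  obtain ⟨ε, ⟨h₁, h₂⟩, hε⟩ := ((hsmall hb₁).and (hsmall hb₂) |>.and self_mem_nhdsWithin).exists
  exact ⟨ε, hε, h₁, h₂⟩

theorem stmt5_general (d : ℕ) (hd : 1 ≤ d) (α β L : ℝ) (hα : 0 < α) (hβ : 0 < β) (hL : 0 < L)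
    (hdα : 2 * α ≤ (d : ℝ)) (K : Set (Euc d))
    (hKint : (interior K).Nonempty) :
    ∃ (C0 c0 r0 μmin μmax : ℝ) (PX : Measure (Euc d)) (η : Euc d → ℝ) (x0 : Euc d),
      0 < C0 ∧ 0 < c0 ∧ 0 < r0 ∧ 0 < μmin ∧ μmin < μmax ∧
      MemPS α C0 β L c0 r0 μmin μmax K PX η ∧
      x0 ∈ interior (msupport PX) ∧ Hits η (1 / 2) x0 := by
  have : Nonempty (Fin d) := ⟨⟨0, hd⟩⟩ -- makes `Euc d` nontrivial
  obtain ⟨z, hz⟩ := hKint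
  obtain ⟨r, hr, hrK⟩ := nhds_basis_closedBall.mem_iff.1 (mem_interior_iff_mem_nhds.1 hz)
  obtain ⟨ψ, hψ, hψc, hψz⟩ := exists_contDiff_hasCompactSupport_eqOn_sq_norm_sub z hr
  obtain ⟨B, hB⟩ := hψc.exists_bound_of_continuous hψ.continuous
  obtain ⟨L', hL'⟩ := hψc.exists_holderClass hβ (hψ.of_le (by exact_mod_cast le_top))
  obtain ⟨ε, hε, hεB, hεL⟩ := exists_pos_mul_le_and_mul_le (a₁ := B) (a₂ := L') one_half_pos hL
  have hηz : ∀ x ∈ closedBall z r, 1 / 2 + ε * ψ x = 1 / 2 + ε * ‖x - z‖ ^ 2 :=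
    fun x hx => by rw [hψz x hx]
  have hA0 : volume (closedBall z r) ≠ 0 := (measure_closedBall_pos volume z hr).ne'
  have hAT : volume (closedBall z r) ≠ ⊤ := measure_closedBall_lt_top.ne
  have hc : 0 < (volume (closedBall z r)).toReal⁻¹ := inv_pos.2 (ENNReal.toReal_pos hA0 hAT)
  refine ⟨_, _, r, _, _, volume[|closedBall z r], fun x => 1 / 2 + ε * ψ x, z, by positivity,
    by positivity, hr, hc, lt_add_one _,
    ⟨cond_isProbabilityMeasure_of_finite hA0 hAT,
      (continuous_const.add (continuous_const.mul hψ.continuous)).measurable, fun x => ?_,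
      margin_cond_closedBall hr hε hα hdα hηz,
      (hL'.const_add_mul _ _).mono (by rwa [abs_of_pos hε]),
      strongDensity_cond_closedBall hr hrK le_rfl (lt_add_one _).le⟩,
    interior_maximal (interior_subset_msupport_cond measurableSet_closedBall hAT)
      isOpen_interior (mem_interior_iff_mem_nhds.2 (closedBall_mem_nhds z hr)),
    hits_of_eqOn_closedBall hr hε.ne' hηz⟩
  have hεψ : |ε * ψ x| ≤ 1 / 2 := by
    rw [abs_mul, abs_of_pos hε, ← Real.norm_eq_abs]
    exact (mul_le_mul_of_nonneg_left (hB x) hε.le).trans hεB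
  constructor <;> linarith [abs_le.1 hεψ]

/-- Proposition 3.4, third item. If `d ≥ 2α` then, for suitable
parameters, some distribution in `P_Σ` has a regression function hitting `1/2` at a
point of the interior of the support of `P_X`. -/
theorem stmt5 (d : ℕ) (hd : 1 ≤ d) (α β L : ℝ) (hα : 0 < α) (hβ : 0 < β) (hL : 0 < L)
    (hdα : 2 * α ≤ (d : ℝ)) (K : Set (Euc d)) (hK : IsCompact K)
    (hKint : (interior K).Nonempty) :
    ∃ (C0 c0 r0 μmin μmax : ℝ) (PX : Measure (Euc d)) (η : Euc d → ℝ) (x0 : Euc d),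
      0 < C0 ∧ 0 < c0 ∧ 0 < r0 ∧ 0 < μmin ∧ μmin < μmax ∧
      MemPS α C0 β L c0 r0 μmin μmax K PX η ∧
      x0 ∈ interior (msupport PX) ∧ Hits η (1 / 2) x0 :=
  stmt5_general d hd α β L hα hβ hL hdα K hKint
end
end

section
/- Let P be a distribution of (X,Y) on R^d × {0,1} satisfying the margin assumption MA(α, C0) for some α ≥ 0, C0 > 0. Then for any Borel function η̄: R^d → R, the classifier f̄ = 1{η̄ ≥ 1/2} satisfies R(f̄) − R(f*) ≤ 2 C0 ‖η̄ − η‖_∞^{1+α}, where ‖·‖_∞ denotes the L_∞(R^d, P_X) norm. -/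
open MeasureTheory Metric Set
open scoped ENNReal NNReal

noncomputable section

/-!
The plug-in rule can disagree with the Bayes rule at `x` only if
`|η(x) − 1/2| ≤ |η̄(x) − η(x)| ≤ t := ‖η̄ − η‖_∞`, and a disagreement costs `|2η(x) − 1| ≤ 2t`.
So the excess risk is at most `2t · P_X(0 < |η − 1/2| ≤ t) ≤ 2 C0 t^{1+α}` by the margin
assumption.
-/

-- `η ⁻¹' marginBand t` is the set whose mass `Margin` controls.
def marginBand (t : ℝ) : Set ℝ := {a | 0 < |a - 1 / 2| ∧ |a - 1 / 2| ≤ t}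

lemma measurableSet_marginBand (t : ℝ) : MeasurableSet (marginBand t) := by
  have hdist : Measurable fun a : ℝ => |a - 1 / 2| := by fun_prop
  exact (measurableSet_lt measurable_const hdist).inter (measurableSet_le hdist measurable_const)

lemma loss_sub_bayes_loss_le_indicator {a b t : ℝ} (h : |b - a| ≤ t) :
    (if 1 / 2 ≤ b then 1 - a else a) - (if 1 / 2 ≤ a then 1 - a else a) ≤
      (marginBand t).indicator (fun _ => 2 * t) a := by
  rw [abs_le] at h
  by_cases hband : a ∈ marginBand t
  · rw [indicator_of_mem hband]
    split_ifs <;> linarith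
  · rw [indicator_of_notMem hband]
    simp only [marginBand, mem_ofPred_eq, not_and, not_le] at hband
    split_ifs with hb ha ha
    · linarith
    · have := hband (by rw [abs_of_neg (by linarith)]; linarith)
      rw [abs_of_neg (by linarith)] at this
      linarith
    · rcases ha.eq_or_lt with ha | ha
      · linarith
      · have := hband (by rw [abs_of_pos (by linarith)]; linarith)
        rw [abs_of_pos (by linarith)] at this
        linarith
    · linarith

variable {d : ℕ} {PX : Measure (Euc d)} {η : Euc d → ℝ}

lemma bayes_eq_plugin : bayes η = plugin η := rfl

lemma measurable_plugin {g : Euc d → ℝ} (hg : Measurable g) : Measurable (plugin g) :=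
  measurable_to_bool <| by
    simpa [plugin, preimage] using measurableSet_le measurable_const hg

lemma integrable_loss [IsFiniteMeasure PX] (hη : Measurable η)
    (hη1 : ∀ x, η x ∈ Icc (0 : ℝ) 1) {f : Euc d → Bool} (hf : Measurable f) :
    Integrable (fun x => if f x then 1 - η x else η x) PX := by
  refine .of_bound (Measurable.ite (hf (measurableSet_singleton true))
    (measurable_const.sub hη) hη).aestronglyMeasurable 1 (ae_of_all _ fun x => ?_)
  obtain ⟨h0, h1⟩ := hη1 x
  split_ifs <;> rw [Real.norm_eq_abs, abs_le] <;> constructor <;> linarith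

lemma risk_plugin_sub_risk_bayes_le [IsFiniteMeasure PX] (hη : Measurable η)
    (hη1 : ∀ x, η x ∈ Icc (0 : ℝ) 1) {g : Euc d → ℝ} (hg : Measurable g) {t : ℝ}
    (hgt : ∀ᵐ x ∂PX, |g x - η x| ≤ t) :
    risk PX η (plugin g) - risk PX η (bayes η) ≤ 2 * t * (PX (η ⁻¹' marginBand t)).toReal := by
  have hband : MeasurableSet (η ⁻¹' marginBand t) := hη (measurableSet_marginBand t)
  have hplugin := integrable_loss (PX := PX) hη hη1 (measurable_plugin hg)
  have hbayes := integrable_loss (PX := PX) hη hη1 (measurable_plugin hη)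
  rw [risk, risk, bayes_eq_plugin, ← integral_sub hplugin hbayes]
  calc _ ≤ ∫ x, (η ⁻¹' marginBand t).indicator (fun _ => 2 * t) x ∂PX :=
        integral_mono_ae (hplugin.sub hbayes) ((integrable_const _).indicator hband)
          (hgt.mono fun x hx => by
            simp only [Pi.sub_apply, plugin, decide_eq_true_eq]
            exact loss_sub_bayes_loss_le_indicator hx)
    _ = _ := by rw [integral_indicator_const _ hband, smul_eq_mul, measureReal_def, mul_comm]

lemma Margin.mul_measure_marginBand_le {α C0 : ℝ} (hMA : Margin PX η α C0) (hα : 0 < 1 + α)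
    (hC0 : 0 ≤ C0) {t : ℝ} (ht : 0 ≤ t) :
    2 * t * (PX (η ⁻¹' marginBand t)).toReal ≤ 2 * C0 * t ^ (1 + α) := by
  rcases ht.eq_or_lt with rfl | ht
  · simp [Real.zero_rpow hα.ne']
  have hmeas : (PX (η ⁻¹' marginBand t)).toReal ≤ C0 * t ^ α :=
    ENNReal.toReal_le_of_le_ofReal (by positivity) (hMA t ht)
  calc 2 * t * (PX (η ⁻¹' marginBand t)).toReal ≤ 2 * t * (C0 * t ^ α) := by gcongr
    _ = 2 * C0 * t ^ (1 + α) := by rw [Real.rpow_add ht, Real.rpow_one]; ring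

lemma ae_abs_le_toReal_eLpNorm_top {f : Euc d → ℝ} (hf : eLpNorm f ⊤ PX ≠ ⊤) :
    ∀ᵐ x ∂PX, |f x| ≤ (eLpNorm f ⊤ PX).toReal := by
  filter_upwards [ae_le_eLpNormEssSup (f := f) (μ := PX)] with x hx
  rw [← eLpNorm_exponent_top, ← ENNReal.ofReal_toReal hf, Real.enorm_eq_ofReal_abs,
    ENNReal.ofReal_le_ofReal_iff ENNReal.toReal_nonneg] at hx
  exact hx

/-- Lemma 5.1, inequality (5.1). Under MA(α, C0), for any Borel `η̄`,
the plug-in rule `f̄ = 1{η̄ ≥ 1/2}` satisfies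
`R(f̄) − R(f*) ≤ 2 C0 ‖η̄ − η‖_∞^{1+α}` (the `L_∞(ℝ^d, P_X)` norm). -/
theorem stmt14 (d : ℕ) (α C0 : ℝ) (hα : 0 ≤ α) (hC0 : 0 < C0)
    (PX : Measure (Euc d)) (η : Euc d → ℝ)
    (hP : IsProbabilityMeasure PX) (hη : Measurable η) (hη1 : ∀ x, η x ∈ Icc (0 : ℝ) 1)
    (hMA : Margin PX η α C0) (bη : Euc d → ℝ) (hbη : Measurable bη) :
    ENNReal.ofReal (risk PX η (plugin bη) - risk PX η (bayes η)) ≤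
      ENNReal.ofReal (2 * C0) * eLpNorm (fun x => bη x - η x) ⊤ PX ^ (1 + α) := by
  set δ := eLpNorm (fun x => bη x - η x) ⊤ PX
  have hα1 : 0 < 1 + α := by linarith
  rcases eq_or_ne δ ⊤ with hδ | hδ
  · simp [hδ, ENNReal.top_rpow_of_pos hα1, hC0]
  have hexcess := (risk_plugin_sub_risk_bayes_le hη hη1 hbη
    (ae_abs_le_toReal_eLpNorm_top hδ)).trans
    (hMA.mul_measure_marginBand_le hα1 hC0.le ENNReal.toReal_nonneg)
  calc ENNReal.ofReal (risk PX η (plugin bη) - risk PX η (bayes η))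
      ≤ ENNReal.ofReal (2 * C0 * δ.toReal ^ (1 + α)) := ENNReal.ofReal_le_ofReal hexcess
    _ = ENNReal.ofReal (2 * C0) * δ ^ (1 + α) := by
      rw [ENNReal.ofReal_mul (by positivity),
        ← ENNReal.ofReal_rpow_of_nonneg ENNReal.toReal_nonneg hα1.le, ENNReal.ofReal_toReal hδ]
end
end

section
/- Let 1 ≤ p < ∞ and let P be a distribution of (X,Y) on R^d × {0,1} satisfying the margin assumption MA(α, C0) with α > 0, C0 > 0. Then for any Borel function η̄: R^d → R, the classifier f̄ = 1{η̄ ≥ 1/2} satisfies R(f̄) − R(f*) ≤ C1(α, p) ‖η − η̄‖_p^{p(1+α)/(p+α)}, where ‖·‖_p denotes the L_p(R^d, P_X) norm and C1(α, p) = 2 (α+p) p^{−1} (p/α)^{α/(α+p)} C0^{(p−1)/(α+p)}. -/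
open MeasureTheory Metric Set
open scoped ENNReal NNReal

noncomputable section

/-!
Where the plug-in rule and the Bayes rule disagree, `1/2` lies between `η̄ x` and `η x`, so
`|η x - 1/2| ≤ |η x - η̄ x|` there and the excess risk is at most
`2 ∫_{0 < |η - 1/2| ≤ |η - η̄|} |η - η̄| dP_X`. Split this set at `|η - 1/2| = δ`: the part near
the boundary has measure at most `C0 δ^α` by the margin assumption and is handled by Hölder's
inequality, while on the rest `|η - η̄| > δ`, hence `|η - η̄| ≤ δ^(1-p) |η - η̄|^p`. Optimising in
`δ` gives `C1(α, p)`; for `p = 1` the crude bound `2 ‖η - η̄‖₁` is already enough.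
-/

/-- The constant `C1(α, p)`. -/
def excessRiskConst (α p C0 : ℝ) : ℝ :=
  2 * (α + p) * p⁻¹ * (p / α) ^ (α / (α + p)) * C0 ^ ((p - 1) / (α + p))

section Tradeoff

variable {p α C0 t : ℝ}

/-- `δ` is the minimiser of `δ ↦ t (C0 δ^α)^(1 - 1/p) + δ^(1-p) t^p`. -/
theorem margin_tradeoff_eq (hp : 1 < p) (hα : 0 < α) (hC0 : 0 < C0) (ht : 0 < t) :
    let δ := (p / α) ^ (p / ((p - 1) * (α + p))) * C0 ^ (-(1 / (α + p))) * t ^ (p / (α + p))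
    2 * (t * (C0 * δ ^ α) ^ (1 - 1 / p) + δ ^ (1 - p) * t ^ p) =
      excessRiskConst α p C0 * t ^ (p * (1 + α) / (p + α)) := by
  intro δ
  have hp0 : 0 < p := by linarith
  have hp1 : 0 < p - 1 := by linarith
  have hpα : 0 < p / α := div_pos hp0 hα
  have hδ : 0 < δ := by positivity
  have hlogδ : Real.log δ = p / ((p - 1) * (α + p)) * Real.log (p / α)
      - 1 / (α + p) * Real.log C0 + p / (α + p) * Real.log t := by
    simp (disch := positivity) only [δ, Real.log_mul, Real.log_rpow]
    ring
  set K := (p / α) ^ (α / (α + p)) * C0 ^ ((p - 1) / (α + p)) * t ^ (p * (1 + α) / (p + α))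
  have hnear : t * (C0 * δ ^ α) ^ (1 - 1 / p) = K := by
    refine Real.log_injOn_pos (Set.mem_Ioi.2 (by positivity)) (Set.mem_Ioi.2 (by positivity)) ?_
    simp (disch := positivity) only [K, Real.log_mul, Real.log_rpow, hlogδ]
    field_simp
    ring
  have hfar : δ ^ (1 - p) * t ^ p = α / p * K := by
    refine Real.log_injOn_pos (Set.mem_Ioi.2 (by positivity)) (Set.mem_Ioi.2 (by positivity)) ?_
    simp (disch := positivity) only [K, Real.log_mul, Real.log_rpow, Real.log_div, hlogδ]
    field_simp
    ring
  rw [hnear, hfar, excessRiskConst]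
  field_simp
  ring

theorem le_ofReal_mul_rpow_of_forall_margin_tradeoff {e : ℝ≥0∞} (hp : 1 < p) (hα : 0 < α)
    (hC0 : 0 < C0) (ht : 0 ≤ t)
    (h : ∀ δ > 0,
      e ≤ ENNReal.ofReal (2 * (t * (C0 * δ ^ α) ^ (1 - 1 / p) + δ ^ (1 - p) * t ^ p))) :
    e ≤ ENNReal.ofReal (excessRiskConst α p C0 * t ^ (p * (1 + α) / (p + α))) := by
  obtain rfl | ht := ht.eq_or_lt
  · have hr : p * (1 + α) / (p + α) ≠ 0 := by positivity
    simpa [Real.zero_rpow (by positivity : p ≠ 0), Real.zero_rpow hr] using h 1 one_pos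
  · rw [← margin_tradeoff_eq hp hα hC0 ht]
    exact h _ (by positivity)

theorem two_le_excessRiskConst_one (hα : 0 < α) : 2 ≤ excessRiskConst α 1 C0 := by
  have hle : α ^ (α / (α + 1)) ≤ α + 1 := by
    rcases le_total α 1 with h | h
    · linarith [Real.rpow_le_one hα.le h (by positivity : 0 ≤ α / (α + 1))]
    · have hs : α / (α + 1) ≤ 1 := (div_le_one (by linarith)).2 (by linarith)
      linarith [Real.rpow_le_self_of_one_le h hs]
  rw [excessRiskConst, sub_self, zero_div, Real.rpow_zero, inv_one, mul_one, mul_one,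
    Real.div_rpow zero_le_one hα.le, Real.one_rpow, mul_one_div, le_div_iff₀ (by positivity)]
  linarith

end Tradeoff

section LpBounds

variable {Ω E : Type*} [MeasurableSpace Ω] {μ : Measure Ω} [NormedAddCommGroup E]

theorem setLIntegral_enorm_le_eLpNorm_mul_measure_rpow {f : Ω → E}
    (hf : AEStronglyMeasurable f μ) {p : ℝ} (hp : 1 ≤ p) (s : Set Ω) :
    ∫⁻ x in s, ‖f x‖ₑ ∂μ ≤ eLpNorm f (ENNReal.ofReal p) μ * μ s ^ (1 - 1 / p) := by
  have h1p : (1 : ℝ≥0∞) ≤ ENNReal.ofReal p := by simpa using ENNReal.ofReal_le_ofReal hp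
  calc ∫⁻ x in s, ‖f x‖ₑ ∂μ = eLpNorm f 1 (μ.restrict s) := eLpNorm_one_eq_lintegral_enorm.symm
    _ ≤ eLpNorm f (ENNReal.ofReal p) (μ.restrict s) * μ.restrict s univ ^ (1 - 1 / p) := by
        simpa [ENNReal.toReal_ofReal (zero_le_one.trans hp)] using
          eLpNorm_le_eLpNorm_mul_rpow_measure_univ h1p hf.restrict
    _ ≤ eLpNorm f (ENNReal.ofReal p) μ * μ s ^ (1 - 1 / p) := by
        rw [Measure.restrict_apply_univ]
        gcongr
        exact Measure.restrict_le_self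

theorem le_rpow_one_sub_mul_rpow {a δ p : ℝ} (hδ : 0 < δ) (hδa : δ ≤ a) (hp : 1 ≤ p) :
    a ≤ δ ^ (1 - p) * a ^ p := by
  have ha : 0 < a := hδ.trans_le hδa
  calc a = δ ^ (1 - p) * δ ^ (p - 1) * a := by
        rw [← Real.rpow_add hδ]; simp
    _ ≤ δ ^ (1 - p) * a ^ (p - 1) * a := by
        gcongr
    _ = δ ^ (1 - p) * a ^ p := by
        rw [mul_assoc, ← Real.rpow_add_one ha.ne']; simp

theorem setLIntegral_enorm_le_of_le_norm {f : Ω → E} (hf : AEStronglyMeasurable f μ)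
    {p δ : ℝ} (hp : 1 ≤ p) (hδ : 0 < δ) {s : Set Ω} (hfs : ∀ x ∈ s, δ ≤ ‖f x‖) :
    ∫⁻ x in s, ‖f x‖ₑ ∂μ ≤ ENNReal.ofReal (δ ^ (1 - p)) * eLpNorm f (ENNReal.ofReal p) μ ^ p := by
  have hp0 : 0 < p := zero_lt_one.trans_le hp
  calc ∫⁻ x in s, ‖f x‖ₑ ∂μ ≤ ∫⁻ x in s, ENNReal.ofReal (δ ^ (1 - p)) * ‖f x‖ₑ ^ p ∂μ := by
        refine setLIntegral_mono_ae ((hf.enorm.pow_const p).const_mul _).restrict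
          (ae_of_all _ fun x hx => ?_)
        rw [← ofReal_norm, ENNReal.ofReal_rpow_of_nonneg (norm_nonneg _) hp0.le,
          ← ENNReal.ofReal_mul (by positivity)]
        exact ENNReal.ofReal_le_ofReal (le_rpow_one_sub_mul_rpow hδ (hfs x hx) hp)
    _ ≤ ∫⁻ x, ENNReal.ofReal (δ ^ (1 - p)) * ‖f x‖ₑ ^ p ∂μ := setLIntegral_le_lintegral _ _
    _ = ENNReal.ofReal (δ ^ (1 - p)) * eLpNorm f (ENNReal.ofReal p) μ ^ p := by
        rw [lintegral_const_mul' _ _ ENNReal.ofReal_ne_top,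
          eLpNorm_eq_lintegral_rpow_enorm_toReal (by simpa using hp0) ENNReal.ofReal_ne_top,
          ENNReal.toReal_ofReal hp0.le, ← ENNReal.rpow_mul, one_div_mul_cancel hp0.ne',
          ENNReal.rpow_one]

theorem setLIntegral_enorm_le_of_margin {m : Ω → ℝ} {f : Ω → E}
    (hf : AEStronglyMeasurable f μ) {p δ M t : ℝ} (hp : 1 ≤ p) (hδ : 0 < δ) (hM : 0 ≤ M)
    (hmargin : μ {x | 0 < m x ∧ m x ≤ δ} ≤ ENNReal.ofReal M)
    (ht : eLpNorm f (ENNReal.ofReal p) μ = ENNReal.ofReal t) (ht0 : 0 ≤ t)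
    {s : Set Ω} (hsm : ∀ x ∈ s, 0 < m x ∧ m x ≤ ‖f x‖) :
    ∫⁻ x in s, ‖f x‖ₑ ∂μ ≤ ENNReal.ofReal (t * M ^ (1 - 1 / p) + δ ^ (1 - p) * t ^ p) := by
  have hp0 : 0 < p := zero_lt_one.trans_le hp
  have hexp : 0 ≤ 1 - 1 / p := by rw [sub_nonneg, div_le_one hp0]; exact hp
  have hcover : s ⊆ (s ∩ {x | m x ≤ δ}) ∪ (s ∩ {x | δ < m x}) := by
    intro x hx
    rcases le_or_gt (m x) δ with h | h
    exacts [.inl ⟨hx, h⟩, .inr ⟨hx, h⟩]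
  have hnear : μ (s ∩ {x | m x ≤ δ}) ≤ ENNReal.ofReal M :=
    (measure_mono (fun x hx => ⟨(hsm x hx.1).1, hx.2⟩ :
      s ∩ {x | m x ≤ δ} ⊆ {x | 0 < m x ∧ m x ≤ δ})).trans hmargin
  have hfar : ∀ x ∈ s ∩ {x | δ < m x}, δ ≤ ‖f x‖ := fun x hx =>
    hx.2.le.trans (hsm x hx.1).2
  calc ∫⁻ x in s, ‖f x‖ₑ ∂μ
      ≤ ∫⁻ x in s ∩ {x | m x ≤ δ}, ‖f x‖ₑ ∂μ + ∫⁻ x in s ∩ {x | δ < m x}, ‖f x‖ₑ ∂μ :=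
        (lintegral_mono_set hcover).trans (lintegral_union_le _ _ _)
    _ ≤ ENNReal.ofReal t * ENNReal.ofReal M ^ (1 - 1 / p)
          + ENNReal.ofReal (δ ^ (1 - p)) * ENNReal.ofReal t ^ p := by
        rw [← ht]
        gcongr
        · exact (setLIntegral_enorm_le_eLpNorm_mul_measure_rpow hf hp _).trans (by gcongr)
        · exact setLIntegral_enorm_le_of_le_norm hf hp hδ hfar
    _ = ENNReal.ofReal (t * M ^ (1 - 1 / p) + δ ^ (1 - p) * t ^ p) := by
        rw [ENNReal.ofReal_rpow_of_nonneg hM hexp, ENNReal.ofReal_rpow_of_nonneg ht0 hp0.le,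
          ← ENNReal.ofReal_mul ht0, ← ENNReal.ofReal_mul (by positivity),
          ← ENNReal.ofReal_add (by positivity) (by positivity)]

theorem two_mul_setLIntegral_enorm_le_of_margin {m : Ω → ℝ} {f : Ω → E}
    (hf : AEStronglyMeasurable f μ) {p α C0 : ℝ} (hp : 1 < p) (hα : 0 < α) (hC0 : 0 < C0)
    (hmargin : ∀ δ > 0, μ {x | 0 < m x ∧ m x ≤ δ} ≤ ENNReal.ofReal (C0 * δ ^ α))
    {s : Set Ω} (hsm : ∀ x ∈ s, 0 < m x ∧ m x ≤ ‖f x‖) :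
    2 * ∫⁻ x in s, ‖f x‖ₑ ∂μ ≤ ENNReal.ofReal (excessRiskConst α p C0) *
      eLpNorm f (ENNReal.ofReal p) μ ^ (p * (1 + α) / (p + α)) := by
  have hp0 : 0 < p := by linarith
  obtain htop | htop := eq_or_ne (eLpNorm f (ENNReal.ofReal p) μ) ⊤
  · have hC : 0 < excessRiskConst α p C0 := by unfold excessRiskConst; positivity
    rw [htop, ENNReal.top_rpow_of_pos (by positivity),
      ENNReal.mul_top (ENNReal.ofReal_pos.2 hC).ne']
    exact le_top
  set t := (eLpNorm f (ENNReal.ofReal p) μ).toReal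
  have ht : eLpNorm f (ENNReal.ofReal p) μ = ENNReal.ofReal t := (ENNReal.ofReal_toReal htop).symm
  rw [ht, ENNReal.ofReal_rpow_of_nonneg ENNReal.toReal_nonneg (by positivity),
    ← ENNReal.ofReal_mul' (by positivity)]
  refine le_ofReal_mul_rpow_of_forall_margin_tradeoff hp hα hC0 ENNReal.toReal_nonneg
    fun δ hδ => ?_
  rw [ENNReal.ofReal_mul zero_le_two, ENNReal.ofReal_ofNat]
  exact mul_le_mul_right (setLIntegral_enorm_le_of_margin hf hp.le hδ (by positivity)
    (hmargin δ hδ) ht ENNReal.toReal_nonneg hsm) 2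

end LpBounds

section ExcessRisk

variable {d : ℕ} {PX : Measure (Euc d)} {η g : Euc d → ℝ}

theorem abs_loss_plugin_sub_loss_bayes_le (x : Euc d) :
    |(if plugin g x then 1 - η x else η x) - (if bayes η x then 1 - η x else η x)| ≤
      2 * |{x | 0 < |η x - 1 / 2| ∧ |η x - 1 / 2| ≤ |η x - g x|}.indicator
        (fun x => η x - g x) x| := by
  simp only [plugin, bayes, Set.indicator, Set.mem_ofPred_eq, decide_eq_true_eq]
  split_ifs <;> grind

theorem integrable_loss_plugin [IsFiniteMeasure PX] (hη : Measurable η)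
    (hη1 : ∀ x, η x ∈ Icc (0 : ℝ) 1) (hg : Measurable g) :
    Integrable (fun x => if plugin g x then 1 - η x else η x) PX := by
  have hmeas : Measurable fun x => if plugin g x then 1 - η x else η x :=
    Measurable.ite (by simpa [plugin] using measurableSet_le measurable_const hg)
      (measurable_const.sub hη) hη
  refine .of_bound hmeas.aestronglyMeasurable 1 (ae_of_all _ fun x => ?_)
  have := hη1 x
  split_ifs <;> rw [Real.norm_eq_abs, abs_le] <;> constructor <;> linarith [this.1, this.2]

theorem ofReal_risk_plugin_sub_risk_bayes_le [IsFiniteMeasure PX] (hη : Measurable η)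
    (hη1 : ∀ x, η x ∈ Icc (0 : ℝ) 1) (hg : Measurable g) :
    ENNReal.ofReal (risk PX η (plugin g) - risk PX η (bayes η)) ≤
      2 * ∫⁻ x in {x | 0 < |η x - 1 / 2| ∧ |η x - 1 / 2| ≤ |η x - g x|}, ‖η x - g x‖ₑ ∂PX := by
  set s := {x | 0 < |η x - 1 / 2| ∧ |η x - 1 / 2| ≤ |η x - g x|}
  have hs : MeasurableSet s := by
    have hm : Measurable fun x => |η x - 1 / 2| := (hη.sub measurable_const).abs
    exact (measurableSet_lt measurable_const hm).inter (measurableSet_le hm (hη.sub hg).abs)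
  rw [risk, risk, show bayes η = plugin η from rfl,
    ← integral_sub (integrable_loss_plugin hη hη1 hg) (integrable_loss_plugin hη hη1 hη)]
  refine (ENNReal.ofReal_le_ofReal (le_abs_self _)).trans ?_
  rw [← Real.enorm_eq_ofReal_abs]
  refine (enorm_integral_le_lintegral_enorm _).trans ?_
  calc
    _ ≤ ∫⁻ x, 2 * s.indicator (fun x => ‖η x - g x‖ₑ) x ∂PX := by
        refine lintegral_mono fun x => ?_
        rw [← enorm_indicator_eq_indicator_enorm, Real.enorm_eq_ofReal_abs,
          Real.enorm_eq_ofReal_abs, ← ENNReal.ofReal_ofNat 2, ← ENNReal.ofReal_mul zero_le_two]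
        exact ENNReal.ofReal_le_ofReal (abs_loss_plugin_sub_loss_bayes_le x)
    _ = 2 * ∫⁻ x in s, ‖η x - g x‖ₑ ∂PX := by
        rw [lintegral_const_mul' _ _ ENNReal.ofNat_ne_top, lintegral_indicator hs]

end ExcessRisk

/-- Lemma 5.2, inequality (5.3). Under MA(α, C0) with `α > 0`, for
any `1 ≤ p < ∞` and any Borel `η̄`, the plug-in rule `f̄ = 1{η̄ ≥ 1/2}` satisfies
`R(f̄) − R(f*) ≤ C1(α,p) ‖η − η̄‖_p^{p(1+α)/(p+α)}` with
`C1(α,p) = 2 (α+p) p⁻¹ (p/α)^{α/(α+p)} C0^{(p−1)/(α+p)}`. -/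
theorem stmt16 (d : ℕ) (p α C0 : ℝ) (hp : 1 ≤ p) (hα : 0 < α) (hC0 : 0 < C0)
    (PX : Measure (Euc d)) (η : Euc d → ℝ)
    (hP : IsProbabilityMeasure PX) (hη : Measurable η) (hη1 : ∀ x, η x ∈ Icc (0 : ℝ) 1)
    (hMA : Margin PX η α C0) (bη : Euc d → ℝ) (hbη : Measurable bη) :
    ENNReal.ofReal (risk PX η (plugin bη) - risk PX η (bayes η)) ≤
      ENNReal.ofReal
          (2 * (α + p) * p⁻¹ * (p / α) ^ (α / (α + p)) * C0 ^ ((p - 1) / (α + p))) *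
        eLpNorm (fun x => η x - bη x) (ENNReal.ofReal p) PX ^ (p * (1 + α) / (p + α)) := by
  have hf : AEStronglyMeasurable (fun x => η x - bη x) PX := (hη.sub hbη).aestronglyMeasurable
  refine (ofReal_risk_plugin_sub_risk_bayes_le hη hη1 hbη).trans ?_
  obtain rfl | hp1 := hp.eq_or_lt
  · rw [show 1 * (1 + α) / (1 + α) = (1 : ℝ) by field_simp, ENNReal.rpow_one]
    gcongr
    · rw [← ENNReal.ofReal_ofNat 2]
      exact ENNReal.ofReal_le_ofReal (two_le_excessRiskConst_one hα)
    · simpa using setLIntegral_enorm_le_eLpNorm_mul_measure_rpow hf le_rfl _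
  · exact two_mul_setLIntegral_enorm_le_of_margin (m := fun x => |η x - 1 / 2|) hf hp1 hα hC0
      hMA fun x hx => hx

end
end

section
/- Let P be a distribution of (X,Y) on R^d × {0,1} whose regression function η belongs to the Hölder class Σ(β, L, R^d) and whose marginal P_X satisfies the strong density assumption with parameters (c0, r0, μ_min, μ_max, C). Then for any κ > 0 there exist constants L' > 0 and t0 > 0 such that for every x in the support of P_X and every 0 < t ≤ t0, P_X( |η(X) − η(x)| ≤ t and X ∈ B(x, κ t^{1/(1∧β)}) ) ≥ L' t^{d/(1∧β)}. -/
open MeasureTheory Metric Set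
open scoped ENNReal NNReal

noncomputable section

/-!
Near a point `x` of the support, `η` is `(1 ∧ β)`-Hölder: globally when `β ≤ 1`, and
Lipschitz on a neighbourhood of the compact set `A` when `β > 1`. Hence the ball of radius
`ρ ≍ t^{1/(1∧β)}` around `x` lies in `{|η − η(x)| ≤ t}`, and by regularity of `A` and the
lower bound on the density its `P_X`-measure is at least `μmin c0 λ(B(x, ρ)) ≍ t^{d/(1∧β)}`.
-/

lemma HolderClass.abs_sub_le_of_le_one_s18 {d : ℕ} {β L : ℝ} {g : Euc d → ℝ}
    (hg : HolderClass β L g) (hβ : 0 < β) (hβ1 : β ≤ 1) (x y : Euc d) :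
    |g y - g x| ≤ L * ‖y - x‖ ^ β := by
  have hdeg : ⌈β⌉₊ - 1 = 0 := by
    have : ⌈β⌉₊ = 1 :=
      le_antisymm (Nat.ceil_le.2 (by exact_mod_cast hβ1)) (Nat.one_le_ceil_iff.2 hβ)
    omega
  simpa [hdeg, taylorPoly] using hg.2 x y

lemma HolderClass.contDiff_one_s18 {d : ℕ} {β L : ℝ} {g : Euc d → ℝ} (hg : HolderClass β L g)
    (hβ1 : 1 < β) : ContDiff ℝ 1 g :=
  hg.1.of_le (by exact_mod_cast Nat.le_sub_one_of_lt (Nat.lt_ceil.2 (by exact_mod_cast hβ1)))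

lemma ContDiff.exists_abs_sub_le_of_isCompact {E : Type*} [NormedAddCommGroup E]
    [NormedSpace ℝ E] [ProperSpace E] {g : E → ℝ} (hg : ContDiff ℝ 1 g) {A : Set E}
    (hA : IsCompact A) :
    ∃ M : ℝ, 0 < M ∧ ∀ x ∈ A, ∀ y : E, ‖y - x‖ ≤ 1 → |g y - g x| ≤ M * ‖y - x‖ := by
  obtain ⟨R, hAR⟩ := hA.isBounded.subset_closedBall 0
  obtain ⟨K, hK⟩ := hg.contDiffOn.exists_lipschitzOnWith one_ne_zero
    (convex_closedBall (0 : E) (R + 1)) (isCompact_closedBall 0 (R + 1))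
  refine ⟨K + 1, by positivity, fun x hx y hy => ?_⟩
  have hxR : ‖x‖ ≤ R := mem_closedBall_zero_iff.1 (hAR hx)
  have hy' : y ∈ closedBall (0 : E) (R + 1) := by
    rw [mem_closedBall_zero_iff]
    calc ‖y‖ ≤ ‖y - x‖ + ‖x‖ := norm_le_norm_sub_add y x
      _ ≤ R + 1 := by linarith
  have hx' : x ∈ closedBall (0 : E) (R + 1) :=
    closedBall_subset_closedBall (by linarith) (hAR hx)
  calc |g y - g x| ≤ K * ‖y - x‖ := by
        simpa [Real.dist_eq, dist_eq_norm] using hK.dist_le_mul y hy' x hx'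
    _ ≤ (K + 1) * ‖y - x‖ := by gcongr; linarith

lemma HolderClass.exists_abs_sub_le_rpow_of_isCompact {d : ℕ} {β L : ℝ} {g : Euc d → ℝ}
    (hg : HolderClass β L g) (hβ : 0 < β) (hL : 0 < L) {A : Set (Euc d)} (hA : IsCompact A) :
    ∃ M : ℝ, 0 < M ∧ ∀ x ∈ A, ∀ y : Euc d, ‖y - x‖ ≤ 1 →
      |g y - g x| ≤ M * ‖y - x‖ ^ min 1 β := by
  rcases le_or_gt β 1 with hβ1 | hβ1
  · rw [min_eq_right hβ1]
    exact ⟨L, hL, fun x _ y _ => hg.abs_sub_le_of_le_one_s18 hβ hβ1 x y⟩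
  · simpa only [min_eq_left hβ1.le, Real.rpow_one] using
      (hg.contDiff_one_s18 hβ1).exists_abs_sub_le_of_isCompact hA

lemma closedBall_subset_abs_sub_le {E : Type*} [SeminormedAddCommGroup E] {g : E → ℝ}
    {x : E} {M γ ρ t : ℝ} (hM : 0 ≤ M) (hγ : 0 ≤ γ)
    (hg : ∀ y : E, ‖y - x‖ ≤ 1 → |g y - g x| ≤ M * ‖y - x‖ ^ γ) (hρ1 : ρ ≤ 1)
    (hρt : M * ρ ^ γ ≤ t) : closedBall x ρ ⊆ {y | |g y - g x| ≤ t} := fun y hy => by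
  rw [mem_closedBall, dist_eq_norm] at hy
  calc |g y - g x| ≤ M * ‖y - x‖ ^ γ := hg y (hy.trans hρ1)
    _ ≤ M * ρ ^ γ := by gcongr
    _ ≤ t := hρt

lemma exists_pos_mul_rpow_inv_le {M γ r : ℝ} (hM : 0 < M) (hγ : 0 < γ) (hr : 0 ≤ r) {κ : ℝ}
    (hκ : 0 < κ) :
    ∃ c : ℝ, 0 < c ∧ c ≤ κ ∧ ∀ t : ℝ, 0 ≤ t → t ≤ M * r ^ γ →
      c * t ^ γ⁻¹ ≤ r ∧ M * (c * t ^ γ⁻¹) ^ γ ≤ t := by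
  refine ⟨min κ (M ^ γ⁻¹)⁻¹, lt_min hκ (by positivity), min_le_left _ _, fun t ht htr => ?_⟩
  have hρt : min κ (M ^ γ⁻¹)⁻¹ * t ^ γ⁻¹ ≤ (t / M) ^ γ⁻¹ := by
    rw [Real.div_rpow ht hM.le, div_eq_inv_mul]
    exact mul_le_mul_of_nonneg_right (min_le_right _ _) (by positivity)
  constructor
  · refine hρt.trans ?_
    rw [← Real.rpow_rpow_inv hr hγ.ne']
    gcongr
    rwa [div_le_iff₀' hM]
  · calc M * (min κ (M ^ γ⁻¹)⁻¹ * t ^ γ⁻¹) ^ γ ≤ M * ((t / M) ^ γ⁻¹) ^ γ := by gcongr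
      _ = t := by rw [Real.rpow_inv_rpow (by positivity) hγ.ne', mul_div_cancel₀ _ hM.ne']

lemma msupport_subset_of_measure_compl_eq_zero {d : ℕ} {PX : Measure (Euc d)}
    {A : Set (Euc d)} (hA : IsClosed A) (hPA : PX Aᶜ = 0) : msupport PX ⊆ A := by
  intro x hx
  by_contra hxA
  obtain ⟨r, hr, hball⟩ := Metric.isOpen_iff.1 hA.isOpen_compl x hxA
  exact (hx r hr).ne' (measure_mono_null hball hPA)

lemma withDensity_ofReal_compl_eq_zero {α : Type*} [MeasurableSpace α] {ν : Measure α}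
    {f : α → ℝ} {s : Set α} (hs : MeasurableSet s) (hf : ∀ y ∉ s, f y = 0) :
    ν.withDensity (fun y => ENNReal.ofReal (f y)) sᶜ = 0 := by
  rw [withDensity_apply _ hs.compl,
    setLIntegral_congr_fun hs.compl (g := fun _ => 0) fun y hy => by simp [hf y hy], lintegral_zero]

lemma ofReal_mul_le_withDensity_apply {α : Type*} [MeasurableSpace α] {ν : Measure α}
    {f : α → ℝ} {s : Set α} (hs : MeasurableSet s) {a : ℝ} (hf : ∀ y ∈ s, a ≤ f y) :
    ENNReal.ofReal a * ν s ≤ ν.withDensity (fun y => ENNReal.ofReal (f y)) s :=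
  calc ENNReal.ofReal a * ν s = ∫⁻ _ in s, ENNReal.ofReal a ∂ν := (setLIntegral_const s _).symm
    _ ≤ ∫⁻ y in s, ENNReal.ofReal (f y) ∂ν :=
        setLIntegral_mono' hs fun y hy => ENNReal.ofReal_le_ofReal (hf y hy)
    _ ≤ ν.withDensity (fun y => ENNReal.ofReal (f y)) s := withDensity_apply_le _ s

lemma Regular.ofReal_le_withDensity_inter_closedBall {d : ℕ} {c0 r0 μmin : ℝ}
    {A : Set (Euc d)} (hreg : Regular c0 r0 A) (hA : MeasurableSet A) (hc0 : 0 ≤ c0)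
    (hμmin : 0 ≤ μmin) {μ : Euc d → ℝ} (hμ : ∀ y ∈ A, μmin ≤ μ y) {x : Euc d} (hx : x ∈ A)
    {ρ : ℝ} (hρ : 0 < ρ) (hρr0 : ρ ≤ r0) :
    ENNReal.ofReal (μmin * c0 * volume.real (ball (0 : Euc d) 1) * ρ ^ d) ≤
      volume.withDensity (fun y => ENNReal.ofReal (μ y)) (A ∩ closedBall x ρ) := by
  have hvol : ENNReal.ofReal (volume.real (ball (0 : Euc d) 1) * ρ ^ d) =
      volume (closedBall x ρ) := by
    have := Measure.addHaar_real_closedBall volume x hρ.le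
    rw [finrank_euclideanSpace_fin] at this
    rw [mul_comm, ← this, measureReal_def, ENNReal.ofReal_toReal measure_closedBall_lt_top.ne]
  calc ENNReal.ofReal (μmin * c0 * volume.real (ball (0 : Euc d) 1) * ρ ^ d)
      = ENNReal.ofReal μmin * (ENNReal.ofReal c0 * volume (closedBall x ρ)) := by
        rw [← hvol, ← ENNReal.ofReal_mul hc0, ← ENNReal.ofReal_mul hμmin]
        ring_nf
    _ ≤ ENNReal.ofReal μmin * volume (A ∩ closedBall x ρ) := by
        gcongr
        exact hreg x hx ρ hρ hρr0
    _ ≤ _ := ofReal_mul_le_withDensity_apply (hA.inter measurableSet_closedBall)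
        fun y hy => hμ y hy.1

theorem stmt18_general (d : ℕ) (β L c0 r0 μmin μmax : ℝ) (hβ : 0 < β) (hL : 0 < L)
    (hc0 : 0 < c0) (hr0 : 0 < r0) (hμmin : 0 < μmin)
    (K : Set (Euc d))
    (PX : Measure (Euc d)) (η : Euc d → ℝ)
    (hH : HolderClass β L η) (hSD : StrongDensity PX c0 r0 μmin μmax K)
    (κ : ℝ) (hκ : 0 < κ) :
    ∃ L' t0 : ℝ, 0 < L' ∧ 0 < t0 ∧
      ∀ x ∈ msupport PX, ∀ t : ℝ, 0 < t → t ≤ t0 →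
        ENNReal.ofReal (L' * t ^ ((d : ℝ) / min 1 β)) ≤
          PX ({y | |η y - η x| ≤ t} ∩ closedBall x (κ * t ^ (1 / min 1 β))) := by
  obtain ⟨A, hAc, -, hreg, μ, -, hμA, hμ0, rfl⟩ := hSD
  obtain ⟨M, hM, hηM⟩ := hH.exists_abs_sub_le_rpow_of_isCompact hβ hL hAc
  set γ := min 1 β
  have hγ : 0 < γ := lt_min one_pos hβ
  have hr : 0 < min 1 r0 := lt_min one_pos hr0
  obtain ⟨c, hc, hcκ, hρ⟩ := exists_pos_mul_rpow_inv_le hM hγ hr.le hκ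
  have hball : 0 < volume.real (ball (0 : Euc d) 1) :=
    ENNReal.toReal_pos (measure_ball_pos _ _ one_pos).ne' measure_ball_lt_top.ne
  refine ⟨μmin * c0 * volume.real (ball (0 : Euc d) 1) * c ^ d, M * min 1 r0 ^ γ,
    by positivity, by positivity, fun x hx t ht ht0 => ?_⟩
  have hxA : x ∈ A := msupport_subset_of_measure_compl_eq_zero hAc.isClosed
    (withDensity_ofReal_compl_eq_zero hAc.isClosed.measurableSet hμ0) hx
  obtain ⟨hρr, hρt⟩ := hρ t ht.le ht0
  simp only [one_div]
  calc ENNReal.ofReal (μmin * c0 * volume.real (ball (0 : Euc d) 1) * c ^ d * t ^ ((d : ℝ) / γ))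
      = ENNReal.ofReal (μmin * c0 * volume.real (ball (0 : Euc d) 1) * (c * t ^ γ⁻¹) ^ d) := by
        rw [mul_pow, ← Real.rpow_natCast (t ^ γ⁻¹), ← Real.rpow_mul ht.le, inv_mul_eq_div,
          mul_assoc _ (c ^ d)]
    _ ≤ _ := hreg.ofReal_le_withDensity_inter_closedBall hAc.isClosed.measurableSet hc0.le
        hμmin.le (fun y hy => (hμA y hy).1) hxA (by positivity) (hρr.trans (min_le_right _ _))
    _ ≤ _ := measure_mono <| inter_subset_right.trans <| subset_inter
        (closedBall_subset_abs_sub_le hM.le hγ.le (hηM x hxA) (hρr.trans (min_le_left _ _)) hρt)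
        (closedBall_subset_closedBall (by gcongr))

/-- Lemma 6.1. Under the Hölder and strong density assumptions, for
every `κ > 0` there are `L' > 0` and `t0 > 0` such that for every `x` in the support of
`P_X` and every `0 < t ≤ t0`,
`P_X(|η(X) − η(x)| ≤ t, X ∈ B(x, κ t^{1/(1∧β)})) ≥ L' t^{d/(1∧β)}`. -/
theorem stmt18 (d : ℕ) (hd : 1 ≤ d) (β L c0 r0 μmin μmax : ℝ) (hβ : 0 < β) (hL : 0 < L)
    (hc0 : 0 < c0) (hr0 : 0 < r0) (hμmin : 0 < μmin) (hμ : μmin ≤ μmax)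
    (K : Set (Euc d)) (hK : IsCompact K)
    (PX : Measure (Euc d)) (η : Euc d → ℝ)
    (hP : IsProbabilityMeasure PX) (hη : Measurable η) (hη1 : ∀ x, η x ∈ Icc (0 : ℝ) 1)
    (hH : HolderClass β L η) (hSD : StrongDensity PX c0 r0 μmin μmax K)
    (κ : ℝ) (hκ : 0 < κ) :
    ∃ L' t0 : ℝ, 0 < L' ∧ 0 < t0 ∧
      ∀ x ∈ msupport PX, ∀ t : ℝ, 0 < t → t ≤ t0 →
        ENNReal.ofReal (L' * t ^ ((d : ℝ) / min 1 β)) ≤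
          PX ({y | |η y - η x| ≤ t} ∩ closedBall x (κ * t ^ (1 / min 1 β))) :=
  stmt18_general d β L c0 r0 μmin μmax hβ hL hc0 hr0 hμmin K PX η hH hSD κ hκ
end
end

section
/- Let P be a distribution of (X,Y) on R^d × {0,1} satisfying the margin assumption MA(α, C0) with α > 0, C0 > 0. For a decision rule f define f**(x, f) = f*(x) if η(x) ≠ 1/2 and f**(x, f) = f(x) if η(x) = 1/2. Then there exists a constant C > 0 depending only on α and C0 such that for every decision rule f, P_X( f(X) ≠ f**(X, f) ) ≤ C (R(f) − R(f*))^{α/(1+α)}. -/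
/-!
The excess risk of `f` is `2 ∫ |η − 1/2| dP_X` over the set where `f` disagrees with `f*`, and
off the ties `{η = 1/2}` this set is exactly where `f` and `f**` differ. Split it at a level `t`:
the margin assumption bounds the part where `|η − 1/2| ≤ t` by `C0 t^α`, Markov's inequality
bounds the rest by the excess risk divided by `2t`, and `t ≍ (excess risk)^{1/(1+α)}` balances
the two bounds.
-/

open MeasureTheory Metric Set
open scoped ENNReal NNReal

noncomputable section

section

variable {Ω : Type*} [MeasurableSpace Ω] {μ : Measure Ω} {g : Ω → ℝ}

theorem measure_ge_le_ofReal_integral_div (hg : 0 ≤ g) (hgi : Integrable g μ) {t : ℝ}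
    (ht : 0 < t) : μ {x | t ≤ g x} ≤ ENNReal.ofReal ((∫ x, g x ∂μ) / t) := by
  rw [ENNReal.le_ofReal_iff_toReal_le (hgi.measure_ge_lt_top ht).ne
    (div_nonneg (integral_nonneg hg) ht.le), le_div_iff₀ ht, mul_comm]
  exact mul_meas_ge_le_integral_of_nonneg (ae_of_all _ hg) hgi t

theorem measure_pos_le_of_margin {α C0 : ℝ} (hα : 1 + α ≠ 0) (hC0 : 0 ≤ C0) (hg : 0 ≤ g)
    (hgi : Integrable g μ)
    (hmargin : ∀ t, 0 < t → μ {x | 0 < g x ∧ g x ≤ t} ≤ ENNReal.ofReal (C0 * t ^ α)) :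
    μ {x | 0 < g x} ≤ ENNReal.ofReal ((C0 + 1) * (∫ x, g x ∂μ) ^ (α / (1 + α))) := by
  set E := ∫ x, g x ∂μ
  rcases (integral_nonneg hg).eq_or_lt with hE | hE
  · have hg_ae : g =ᵐ[μ] 0 := (integral_eq_zero_iff_of_nonneg hg hgi).1 hE.symm
    calc μ {x | 0 < g x} = 0 := measure_mono_null (fun x hx => ne_of_gt hx) (ae_iff.1 hg_ae)
      _ ≤ _ := zero_le
  set t := E ^ (1 / (1 + α))
  have ht : 0 < t := Real.rpow_pos_of_pos hE _
  have ht_pow : t ^ α = E ^ (α / (1 + α)) := by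
    rw [← Real.rpow_mul hE.le]
    congr 1
    field_simp
  have hE_div : E / t = E ^ (α / (1 + α)) := by
    rw [show α / (1 + α) = 1 - 1 / (1 + α) by field_simp; ring, Real.rpow_sub hE, Real.rpow_one]
  calc μ {x | 0 < g x}
      ≤ μ ({x | 0 < g x ∧ g x ≤ t} ∪ {x | t ≤ g x}) :=
        measure_mono fun x hx => (le_total (g x) t).imp (⟨hx, ·⟩) id
    _ ≤ μ {x | 0 < g x ∧ g x ≤ t} + μ {x | t ≤ g x} := measure_union_le _ _
    _ ≤ ENNReal.ofReal (C0 * t ^ α) + ENNReal.ofReal (E / t) :=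
        add_le_add (hmargin t ht) (measure_ge_le_ofReal_integral_div hg hgi ht)
    _ = ENNReal.ofReal ((C0 + 1) * E ^ (α / (1 + α))) := by
        rw [← ENNReal.ofReal_add (by positivity) (by positivity), ht_pow, hE_div, add_one_mul]

end

section

variable {d : ℕ} {PX : Measure (Euc d)} {η : Euc d → ℝ} {f : Euc d → Bool}

theorem measurable_bayes (hη : Measurable η) : Measurable (bayes η) :=
  measurable_to_bool <| by
    simp only [bayes, preimage, mem_singleton_iff, decide_eq_true_eq]
    exact measurableSet_le measurable_const hη

def disagreementMargin (η : Euc d → ℝ) (f : Euc d → Bool) : Euc d → ℝ :=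
  fun x => if f x = bayes η x then 0 else |η x - 1 / 2|

theorem risk_integrand_sub_bayes (x : Euc d) :
    ((if f x then 1 - η x else η x) - if bayes η x then 1 - η x else η x) =
      2 * disagreementMargin η f x := by
  unfold disagreementMargin
  by_cases h : (1 : ℝ) / 2 ≤ η x
  · rw [show bayes η x = true from decide_eq_true h, abs_of_nonneg (by linarith)]
    cases f x <;> simp only [Bool.false_eq_true, ↓reduceIte] <;> ring
  · rw [show bayes η x = false from decide_eq_false h, abs_of_neg (by linarith)]
    cases f x <;> simp only [Bool.false_eq_true, Bool.true_eq_false, ↓reduceIte] <;> ring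

theorem integrable_risk_integrand [IsFiniteMeasure PX] (hη : Measurable η)
    (hη01 : ∀ x, η x ∈ Icc (0 : ℝ) 1) (hf : Measurable f) :
    Integrable (fun x => if f x then 1 - η x else η x) PX := by
  refine .of_bound (Measurable.ite (hf (measurableSet_singleton true))
    (measurable_const.sub hη) hη).aestronglyMeasurable 1 (ae_of_all _ fun x => ?_)
  obtain ⟨h0, h1⟩ := hη01 x
  split_ifs <;> rw [Real.norm_eq_abs, abs_le] <;> constructor <;> linarith

theorem risk_sub_risk_bayes [IsFiniteMeasure PX] (hη : Measurable η)
    (hη01 : ∀ x, η x ∈ Icc (0 : ℝ) 1) (hf : Measurable f) :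
    risk PX η f - risk PX η (bayes η) = 2 * ∫ x, disagreementMargin η f x ∂PX := by
  rw [risk, risk, ← integral_sub (integrable_risk_integrand hη hη01 hf)
    (integrable_risk_integrand hη hη01 (measurable_bayes hη)), ← integral_const_mul]
  simp only [risk_integrand_sub_bayes]

theorem disagreementMargin_nonneg : 0 ≤ disagreementMargin η f :=
  fun _ => ite_nonneg le_rfl (abs_nonneg _)

theorem integrable_disagreementMargin [IsFiniteMeasure PX] (hη : Measurable η)
    (hη01 : ∀ x, η x ∈ Icc (0 : ℝ) 1) (hf : Measurable f) :
    Integrable (disagreementMargin η f) PX := by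
  refine .of_bound (Measurable.ite (measurableSet_eq_fun hf (measurable_bayes hη))
    measurable_const (hη.sub_const _).abs).aestronglyMeasurable 1 (ae_of_all _ fun x => ?_)
  obtain ⟨h0, h1⟩ := hη01 x
  have habs : |η x - 1 / 2| ≤ 1 := abs_le.2 ⟨by linarith, by linarith⟩
  rw [Real.norm_eq_abs, abs_of_nonneg (disagreementMargin_nonneg x), disagreementMargin]
  split_ifs
  exacts [zero_le_one, habs]

theorem Margin.measure_disagreementMargin_le {α C0 : ℝ} (hMA : Margin PX η α C0) {t : ℝ}
    (ht : 0 < t) :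
    PX {x | 0 < disagreementMargin η f x ∧ disagreementMargin η f x ≤ t} ≤
      ENNReal.ofReal (C0 * t ^ α) := by
  refine (measure_mono fun x hx => ?_).trans (hMA t ht)
  obtain ⟨hpos, hle⟩ := hx
  rw [disagreementMargin] at hpos hle
  split_ifs at hpos hle
  exacts [(lt_irrefl 0 hpos).elim, ⟨hpos, hle⟩]

theorem setOf_ne_bayes_off_ties_eq :
    {x | f x ≠ (if η x = 1 / 2 then f x else bayes η x)} =
      {x | 0 < disagreementMargin η f x} := by
  ext x
  simp only [mem_ofPred_eq, disagreementMargin]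
  by_cases hfx : f x = bayes η x <;> by_cases h : η x = 1 / 2 <;> simp [hfx, h, sub_eq_zero]

end

/-- Lemma 6.2. Under MA(α, C0) with `α > 0`, with
`f**(x, f) = f*(x)` if `η(x) ≠ 1/2` and `f**(x, f) = f(x)` if `η(x) = 1/2`, there is a
constant `C > 0` depending only on `α` and `C0` such that every decision rule `f`
satisfies `P_X(f(X) ≠ f**(X, f)) ≤ C (R(f) − R(f*))^{α/(1+α)}`. -/
theorem stmt19 (α C0 : ℝ) (hα : 0 < α) (hC0 : 0 < C0) :
    ∃ C : ℝ, 0 < C ∧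
      ∀ (d : ℕ) (PX : Measure (Euc d)) (η : Euc d → ℝ),
        IsProbabilityMeasure PX → Measurable η → (∀ x, η x ∈ Icc (0 : ℝ) 1) →
        Margin PX η α C0 →
        ∀ f : Euc d → Bool, Measurable f →
          PX {x | f x ≠ (if η x = 1 / 2 then f x else bayes η x)} ≤
            ENNReal.ofReal
              (C * (risk PX η f - risk PX η (bayes η)) ^ (α / (1 + α))) := by
  refine ⟨C0 + 1, by linarith, fun d PX η _ hη hη01 hMA f hf => ?_⟩
  have hE : 0 ≤ ∫ x, disagreementMargin η f x ∂PX :=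
    integral_nonneg disagreementMargin_nonneg
  rw [setOf_ne_bayes_off_ties_eq, risk_sub_risk_bayes hη hη01 hf]
  calc PX {x | 0 < disagreementMargin η f x}
      ≤ ENNReal.ofReal ((C0 + 1) * (∫ x, disagreementMargin η f x ∂PX) ^ (α / (1 + α))) :=
        measure_pos_le_of_margin (by linarith) hC0.le disagreementMargin_nonneg
          (integrable_disagreementMargin hη hη01 hf)
          fun _ ht => hMA.measure_disagreementMargin_le ht
    _ ≤ ENNReal.ofReal
          ((C0 + 1) * (2 * ∫ x, disagreementMargin η f x ∂PX) ^ (α / (1 + α))) := by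
        gcongr
        linarith

end
end
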